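/- arXiv:1911.12360 — 3 statements merged into one kernel-verified Lean document; each statement's English description precedes it below -/
import Mathlib

section
/- Let W* ∈ B(W^(0), R·m^{−1/2}) satisfy (1/n) Σ_{i=1}^n ℓ(y_i F_{W^(0),W*}(x_i)) = ε_NTRF, and let τ > 0. There is an absolute constant c > 0 such that if the gradient-descent step size satisfies η ≤ c·L^{−1}·M(τ)^{−2}, W* ∈ B(W^(0), τ), and the gradient-descent iterates satisfy W^(t) ∈ B(W^(0), τ) for all 0 ≤ t ≤ t'−1, then ‖W^(0) − W*‖_F² − ‖W^(t') − W*‖_F² ≥ (3/2 − 4 ε_app(τ)) · η · Σ_{t=0}^{t'−1} L_S(W^(t)) − 2 t' η ε_NTRF; equivalently, when ε_app(τ) < 3/8, (1/t') Σ_{t=0}^{t'−1} L_S(W^(t)) ≤ [ ‖W^(0) − W*‖_F² − ‖W^(t') − W*‖_F² + 2 t' η ε_NTRF ] / [ t' η (3/2 − 4 ε_app(τ)) ]. -/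
open MeasureTheory ProbabilityTheory Real
open scoped BigOperators ENNReal NNReal

noncomputable section

namespace Paper

/-- ReLU activation. -/
def relu (z : ℝ) : ℝ := max z 0

/-- Formal derivative of the ReLU: `σ'(z) = 1{z > 0}`. -/
def relu' (z : ℝ) : ℝ := if 0 < z then 1 else 0

/-- Cross-entropy loss `ℓ(z) = log(1 + exp(-z))`. -/
def xent (z : ℝ) : ℝ := Real.log (1 + Real.exp (-z))

/-- Derivative of the cross-entropy loss: `ℓ'(z) = -1/(1+e^z)`. -/
def xent' (z : ℝ) : ℝ := -(1 / (1 + Real.exp z))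

/-- `-ℓ'(z) = 1/(1+e^z)`. -/
def negXent' (z : ℝ) : ℝ := 1 / (1 + Real.exp z)

/-- Weight space for an `L`-layer network of width `m` on inputs of dimension `d`.
Every layer is stored as an `m × (m+d)` array; layer `0` only uses the block of the
first `d` columns, layers `1,…,L-2` the block of the first `m` columns, and layer
`L-1` the first row and first `m` columns. -/
abbrev Wts (L m d : ℕ) := Fin L → Fin m → Fin (m + d) → ℝ

/-- Extension of the weights to arbitrary natural layer indices. -/
def extW (L m d : ℕ) (W : Wts L m d) : ℕ → Fin m → Fin (m + d) → ℝ :=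
  fun l => if h : l < L then W ⟨l, h⟩ else fun _ _ => 0

def colD (m d : ℕ) (k : Fin d) : Fin (m + d) := Fin.castLE (Nat.le_add_left d m) k

def colM (m d : ℕ) (k : Fin m) : Fin (m + d) := Fin.castLE (Nat.le_add_right m d) k

/-- Pre-activations: `preact m d W x l` is the vector `W_l σ(W_{l-1} ⋯ σ(W_0 x) ⋯)`
(0-indexed layers). -/
def preact (m d : ℕ) (W : ℕ → Fin m → Fin (m + d) → ℝ) (x : Fin d → ℝ) : ℕ → Fin m → ℝ
  | 0 => fun j => ∑ k : Fin d, W 0 j (colD m d k) * x k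
  | l + 1 => fun j => ∑ k : Fin m, W (l + 1) j (colM m d k) * relu (preact m d W x l k)

/-- Network output `f_W(x) = √m · W_{L-1} σ( ⋯ σ(W_0 x) ⋯ )` (row `0` of the last layer). -/
def netOut (L m d : ℕ) (W : Wts L m d) (x : Fin d → ℝ) : ℝ :=
  Real.sqrt m * ∑ j : Fin m, ∑ k : Fin m,
    (if (j : ℕ) = 0 then
      extW L m d W (L - 1) j (colM m d k) * relu (preact m d (extW L m d W) x (L - 2) k)
    else 0)

/-- Backpropagated errors; `deltaAux L m d W x t` is the delta at pre-activation level
`L - 2 - t`. -/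
def deltaAux (L m d : ℕ) (W : ℕ → Fin m → Fin (m + d) → ℝ) (x : Fin d → ℝ) :
    ℕ → Fin m → ℝ
  | 0 => fun k =>
      Real.sqrt m * (∑ j : Fin m, if (j : ℕ) = 0 then W (L - 1) j (colM m d k) else 0) *
        relu' (preact m d W x (L - 2) k)
  | t + 1 => fun k =>
      relu' (preact m d W x (L - 2 - (t + 1)) k) *
        ∑ j : Fin m, W (L - 2 - t) j (colM m d k) * deltaAux L m d W x t j

/-- Delta at pre-activation level `l`. -/
def delta (L m d : ℕ) (W : ℕ → Fin m → Fin (m + d) → ℝ) (x : Fin d → ℝ) (l : ℕ) :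
    Fin m → ℝ :=
  deltaAux L m d W x (L - 2 - l)

/-- Formal chain-rule gradient `∇_{W_l} f_W(x)` of the network output w.r.t. layer `l`. -/
def gradLayer (L m d : ℕ) (W : Wts L m d) (x : Fin d → ℝ) (l : ℕ) :
    Fin m → Fin (m + d) → ℝ :=
  fun j c =>
    if l = L - 1 then
      (if h : (j : ℕ) = 0 ∧ (c : ℕ) < m then
        Real.sqrt m * relu (preact m d (extW L m d W) x (L - 2) ⟨(c : ℕ), h.2⟩)
      else 0)
    else if l = 0 then
      delta L m d (extW L m d W) x 0 j * (if h : (c : ℕ) < d then x ⟨(c : ℕ), h⟩ else 0)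
    else
      delta L m d (extW L m d W) x l j *
        (if h : (c : ℕ) < m then relu (preact m d (extW L m d W) x (l - 1) ⟨(c : ℕ), h⟩)
         else 0)

/-- Entrywise inner product of two layer matrices. -/
def inner2 (m d : ℕ) (A B : Fin m → Fin (m + d) → ℝ) : ℝ :=
  ∑ j : Fin m, ∑ c : Fin (m + d), A j c * B j c

/-- `⟨∇ f_W(x), V⟩ = Σ_l ⟨∇_{W_l} f_W(x), V_l⟩`. -/
def gradInner (L m d : ℕ) (W : Wts L m d) (x : Fin d → ℝ) (V : Wts L m d) : ℝ :=
  ∑ l : Fin L, inner2 m d (gradLayer L m d W x (l : ℕ)) (V l)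

/-- NTRF model `F_{W⁰,W}(x) = f_{W⁰}(x) + ⟨∇f_{W⁰}(x), W - W⁰⟩`. -/
def ntrf (L m d : ℕ) (W0 W : Wts L m d) (x : Fin d → ℝ) : ℝ :=
  netOut L m d W0 x + gradInner L m d W0 x (W - W0)

/-- Number of rows actually used by layer `l`. -/
def rowsOf (L m : ℕ) (l : ℕ) : ℕ := if l = L - 1 then 1 else m

/-- Number of columns actually used by layer `l`. -/
def colsOf (m d : ℕ) (l : ℕ) : ℕ := if l = 0 then d else m

/-- Squared Frobenius norm of the relevant block of layer `l`. -/
def layerNormSq (L m d : ℕ) (l : ℕ) (A : Fin m → Fin (m + d) → ℝ) : ℝ :=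
  ∑ j : Fin m, ∑ c : Fin (m + d),
    if (j : ℕ) < rowsOf L m l ∧ (c : ℕ) < colsOf m d l then (A j c) ^ 2 else 0

/-- `W ∈ B(W⁰, τ)`, i.e. `max_l ‖W_l − W⁰_l‖_F ≤ τ`. -/
def inBall (L m d : ℕ) (W0 W : Wts L m d) (τ : ℝ) : Prop :=
  ∀ l : Fin L, Real.sqrt (layerNormSq L m d (l : ℕ) (W l - W0 l)) ≤ τ

/-- `‖W − W'‖_F²` summed over all layers. -/
def distSq (L m d : ℕ) (W W' : Wts L m d) : ℝ :=
  ∑ l : Fin L, layerNormSq L m d (l : ℕ) (W l - W' l)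

/-- Loss on a single example. -/
def sampleLoss (L m d : ℕ) (W : Wts L m d) (x : Fin d → ℝ) (y : ℝ) : ℝ :=
  xent (y * netOut L m d W x)

/-- Empirical training loss `L_S(W)`. -/
def trainLoss (L m d n : ℕ) (X : Fin n → Fin d → ℝ) (Y : Fin n → ℝ) (W : Wts L m d) : ℝ :=
  (1 / (n : ℝ)) * ∑ i : Fin n, sampleLoss L m d W (X i) (Y i)

/-- Formal gradient of the single-sample loss w.r.t. layer `l`. -/
def sampleLossGrad (L m d : ℕ) (x : Fin d → ℝ) (y : ℝ) (W : Wts L m d) (l : ℕ) :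
    Fin m → Fin (m + d) → ℝ :=
  fun j c => xent' (y * netOut L m d W x) * y * gradLayer L m d W x l j c

/-- Formal gradient of the empirical loss w.r.t. layer `l`. -/
def trainLossGrad (L m d n : ℕ) (X : Fin n → Fin d → ℝ) (Y : Fin n → ℝ)
    (W : Wts L m d) (l : ℕ) : Fin m → Fin (m + d) → ℝ :=
  fun j c => (1 / (n : ℝ)) * ∑ i : Fin n, sampleLossGrad L m d (X i) (Y i) W l j c

/-- Gradient descent iterates with step size `η` started at `W0`. -/
def gdIter (L m d n : ℕ) (X : Fin n → Fin d → ℝ) (Y : Fin n → ℝ) (η : ℝ)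
    (W0 : Wts L m d) : ℕ → Wts L m d
  | 0 => W0
  | t + 1 => fun l j c =>
      gdIter L m d n X Y η W0 t l j c -
        η * trainLossGrad L m d n X Y (gdIter L m d n X Y η W0 t) (l : ℕ) j c

/-- Online SGD iterates: step `i → i+1` uses the example `S i`. -/
def sgdIter (L m d : ℕ) (S : ℕ → (Fin d → ℝ) × ℝ) (η : ℝ) (W0 : Wts L m d) :
    ℕ → Wts L m d
  | 0 => W0
  | i + 1 => fun l j c =>
      sgdIter L m d S η W0 i l j c -
        η * sampleLossGrad L m d (S i).1 (S i).2 (sgdIter L m d S η W0 i) (l : ℕ) j c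

/-- Extension of a finite sample to a stream. -/
def extS (n d : ℕ) (S : Fin n → (Fin d → ℝ) × ℝ) : ℕ → (Fin d → ℝ) × ℝ :=
  fun i => if h : i < n then S ⟨i, h⟩ else (fun _ => 0, 1)

/-- Linear approximation error `ε_app(τ)` around `W0`. -/
def epsApp (L m d n : ℕ) (X : Fin n → Fin d → ℝ) (W0 : Wts L m d) (τ : ℝ) : ℝ :=
  sSup { e : ℝ | ∃ (i : Fin n) (W W' : Wts L m d),
    inBall L m d W0 W τ ∧ inBall L m d W0 W' τ ∧
    e = |netOut L m d W' (X i) - netOut L m d W (X i) -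
          gradInner L m d W (X i) (W' - W)| }

/-- Gradient norm bound `M(τ)` around `W0`. -/
def gradBound (L m d n : ℕ) (X : Fin n → Fin d → ℝ) (W0 : Wts L m d) (τ : ℝ) : ℝ :=
  sSup { e : ℝ | ∃ (i : Fin n) (l : Fin L) (W : Wts L m d),
    inBall L m d W0 W τ ∧
    e = Real.sqrt (layerNormSq L m d (l : ℕ) (gradLayer L m d W (X i) (l : ℕ))) }

/-- Average cross-entropy loss of the NTRF model `F_{W0,W}` on the training set. -/
def ntrfLoss (L m d n : ℕ) (X : Fin n → Fin d → ℝ) (Y : Fin n → ℝ)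
    (W0 W : Wts L m d) : ℝ :=
  (1 / (n : ℝ)) * ∑ i : Fin n, xent (Y i * ntrf L m d W0 W (X i))

/-- `ε_NTRF`: the minimum training loss achievable by the NTRF class `F(W0, R)`. -/
def epsNTRF (L m d n : ℕ) (X : Fin n → Fin d → ℝ) (Y : Fin n → ℝ)
    (W0 : Wts L m d) (R : ℝ) : ℝ :=
  sInf { e : ℝ | ∃ W : Wts L m d,
    inBall L m d W0 W (R / Real.sqrt m) ∧ e = ntrfLoss L m d n X Y W0 W }

/-- Variance of the Gaussian initialization at layer `l`. -/
def initVar (L m : ℕ) (l : ℕ) : ℝ≥0 := if l = L - 1 then (m : ℝ≥0)⁻¹ else 2 * (m : ℝ≥0)⁻¹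

/-- The Gaussian random initialization: entries of `W_0,…,W_{L-2}` are i.i.d.
`N(0, 2/m)` and entries of `W_{L-1}` are i.i.d. `N(0, 1/m)`. -/
def initMeasure (L m d : ℕ) : Measure (Wts L m d) :=
  Measure.pi fun l : Fin L =>
    Measure.pi fun _ : Fin m =>
      Measure.pi fun _ : Fin (m + d) => gaussianReal 0 (initVar L m (l : ℕ))

/-- Expected 0-1 error `L_D^{0-1}(W)`. -/
def zeroOneLoss (L m d : ℕ) (D : Measure ((Fin d → ℝ) × ℝ)) (W : Wts L m d) : ℝ :=
  (D {p | p.2 * netOut L m d W p.1 < 0}).toReal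

end Paper

open Paper

namespace KL
open Paper

lemma xent_nonneg (z : ℝ) : 0 ≤ xent z := by
  unfold xent
  apply Real.log_nonneg
  nlinarith [Real.exp_pos (-z)]

lemma xent'_nonpos (z : ℝ) : xent' z ≤ 0 := by
  unfold xent'
  have := Real.exp_pos z
  have : (0:ℝ) ≤ 1 / (1 + Real.exp z) := by positivity
  linarith

lemma neg_xent'_le_one (z : ℝ) : -xent' z ≤ 1 := by
  unfold xent'
  rw [neg_neg, div_le_one (by positivity)]
  nlinarith [Real.exp_pos z]

lemma neg_xent'_le_xent (z : ℝ) : -xent' z ≤ xent z := by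
  unfold xent xent'
  rw [neg_neg]
  have h1 : (0:ℝ) < 1 + Real.exp (-z) := by positivity
  have h2 := Real.log_le_sub_one_of_pos (x := 1 / (1 + Real.exp (-z))) (by positivity)
  rw [Real.log_div one_ne_zero (ne_of_gt h1), Real.log_one] at h2
  have h3 : 1 / (1 + Real.exp z) = 1 - 1 / (1 + Real.exp (-z)) := by
    have hz := Real.exp_pos z
    have hz' := Real.exp_pos (-z)
    have hm : Real.exp z * Real.exp (-z) = 1 := by
      rw [← Real.exp_add]; simp
    field_simp
    nlinarith [hm]
  rw [h3]
  linarith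

lemma hasDerivAt_xent (z : ℝ) : HasDerivAt xent (xent' z) z := by
  have h1 : HasDerivAt (fun w : ℝ => -w) (-1) z := (hasDerivAt_id z).neg
  have h2 : HasDerivAt (fun w : ℝ => Real.exp (-w)) (Real.exp (-z) * (-1)) z :=
    (Real.hasDerivAt_exp (-z)).comp z h1
  have h3 : HasDerivAt (fun w : ℝ => 1 + Real.exp (-w)) (Real.exp (-z) * (-1)) z :=
    h2.const_add 1
  have hpos : (0:ℝ) < 1 + Real.exp (-z) := by positivity
  have h4 := (Real.hasDerivAt_log (ne_of_gt hpos)).comp z h3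
  have : (1 + Real.exp (-z))⁻¹ * (Real.exp (-z) * (-1)) = xent' z := by
    unfold xent'
    have hz := Real.exp_pos z
    have hz' := Real.exp_pos (-z)
    have hm : Real.exp z * Real.exp (-z) = 1 := by rw [← Real.exp_add]; simp
    field_simp
    nlinarith [hm]
  rw [this] at h4
  exact h4

lemma xent'_mono {a b : ℝ} (h : a ≤ b) : xent' a ≤ xent' b := by
  unfold xent'
  have ha : (0:ℝ) < 1 + Real.exp a := by positivity
  have hb : (0:ℝ) < 1 + Real.exp b := by positivity
  have : 1 / (1 + Real.exp b) ≤ 1 / (1 + Real.exp a) :=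
    one_div_le_one_div_of_le ha (by have := Real.exp_le_exp.2 h; linarith)
  linarith

lemma xent_convex (a b : ℝ) : xent a + xent' a * (b - a) ≤ xent b := by
  rcases lt_trichotomy a b with h | h | h
  · obtain ⟨c, hc, hc2⟩ := exists_hasDerivAt_eq_slope xent xent' h
      (fun x _ => (hasDerivAt_xent x).continuousAt.continuousWithinAt)
      (fun x _ => hasDerivAt_xent x)
    have hac : xent' a ≤ xent' c := xent'_mono hc.1.le
    have hslope : xent' c * (b - a) = xent b - xent a := by
      rw [hc2]; field_simp [sub_ne_zero.2 (ne_of_gt h)]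
    nlinarith [hac, hslope]
  · simp [h]
  · obtain ⟨c, hc, hc2⟩ := exists_hasDerivAt_eq_slope xent xent' h
      (fun x _ => (hasDerivAt_xent x).continuousAt.continuousWithinAt)
      (fun x _ => hasDerivAt_xent x)
    have hac : xent' c ≤ xent' a := xent'_mono hc.2.le
    have hslope : xent' c * (a - b) = xent a - xent b := by
      rw [hc2]; field_simp [sub_ne_zero.2 (ne_of_gt h)]
    nlinarith [hac, hslope]

end KL

namespace KL
open Paper Finset

variable {L m d n : ℕ}

/-- block membership predicate -/
def P (L m d : ℕ) (l : ℕ) (j : Fin m) (c : Fin (m + d)) : Prop :=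
  (j : ℕ) < rowsOf L m l ∧ (c : ℕ) < colsOf m d l

instance (l : ℕ) (j : Fin m) (c : Fin (m + d)) : Decidable (P L m d l j c) := by
  unfold P; infer_instance

lemma layerNormSq_eq (l : ℕ) (A : Fin m → Fin (m + d) → ℝ) :
    layerNormSq L m d l A = ∑ j : Fin m, ∑ c : Fin (m + d),
      if P L m d l j c then (A j c) ^ 2 else 0 := rfl

lemma layerNormSq_nonneg (l : ℕ) (A : Fin m → Fin (m + d) → ℝ) :
    0 ≤ layerNormSq L m d l A := by
  rw [layerNormSq_eq]
  apply Finset.sum_nonneg; intro j _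
  apply Finset.sum_nonneg; intro c _
  by_cases h : P L m d l j c <;> simp [h, sq_nonneg]

lemma gradLayer_zero (hL : 2 ≤ L) (W : Wts L m d) (x : Fin d → ℝ) (l : ℕ)
    (j : Fin m) (c : Fin (m + d)) (h : ¬ P L m d l j c) :
    gradLayer L m d W x l j c = 0 := by
  unfold P at h
  unfold gradLayer
  by_cases hl : l = L - 1
  · rw [if_pos hl]
    have hne : l ≠ 0 := by omega
    rw [dif_neg]
    intro ⟨h1, h2⟩
    exact h ⟨by simp [rowsOf, hl]; omega, by simp [colsOf, hne]; omega⟩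
  · rw [if_neg hl]
    have hc : ¬ ((c : ℕ) < colsOf m d l) := by
      intro hc; exact h ⟨by simp [rowsOf, hl, j.isLt], hc⟩
    by_cases h0 : l = 0
    · rw [if_pos h0, dif_neg (by simp [colsOf, h0] at hc; omega), mul_zero]
    · rw [if_neg h0, dif_neg (by simp [colsOf, h0] at hc; omega), mul_zero]

lemma inner2_eq_prod (G V : Fin m → Fin (m + d) → ℝ) :
    inner2 m d G V = ∑ p : Fin m × Fin (m + d), G p.1 p.2 * V p.1 p.2 := by
  unfold inner2; rw [Fintype.sum_prod_type]

lemma layerNormSq_eq_prod (l : ℕ) (A : Fin m → Fin (m + d) → ℝ) :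
    layerNormSq L m d l A = ∑ p : Fin m × Fin (m + d),
      if P L m d l p.1 p.2 then (A p.1 p.2) ^ 2 else 0 := by
  rw [layerNormSq_eq, Fintype.sum_prod_type]

lemma inner2_CS (l : ℕ) (G V : Fin m → Fin (m + d) → ℝ)
    (hG : ∀ j c, ¬ P L m d l j c → G j c = 0) :
    |inner2 m d G V| ≤
      Real.sqrt (layerNormSq L m d l G) * Real.sqrt (layerNormSq L m d l V) := by
  classical
  set F1 : Fin m × Fin (m + d) → ℝ :=
    fun p => if P L m d l p.1 p.2 then |G p.1 p.2| else 0 with hF1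
  set F2 : Fin m × Fin (m + d) → ℝ :=
    fun p => if P L m d l p.1 p.2 then |V p.1 p.2| else 0 with hF2
  have e2 : |inner2 m d G V| ≤ ∑ p : Fin m × Fin (m + d), F1 p * F2 p := by
    rw [inner2_eq_prod]
    refine (Finset.abs_sum_le_sum_abs _ _).trans (le_of_eq ?_)
    refine Finset.sum_congr rfl fun p _ => ?_
    by_cases h : P L m d l p.1 p.2
    · simp [hF1, hF2, h, abs_mul]
    · simp [hF1, hF2, h, hG p.1 p.2 h]
  refine e2.trans ((Real.sum_mul_le_sqrt_mul_sqrt _ F1 F2).trans (le_of_eq ?_))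
  congr 1
  · congr 1
    rw [layerNormSq_eq_prod]
    refine Finset.sum_congr rfl fun p _ => ?_
    by_cases h : P L m d l p.1 p.2 <;> simp [hF1, h, sq_abs]
  · congr 1
    rw [layerNormSq_eq_prod]
    refine Finset.sum_congr rfl fun p _ => ?_
    by_cases h : P L m d l p.1 p.2 <;> simp [hF2, h, sq_abs]

lemma inner2_self (l : ℕ) (G : Fin m → Fin (m + d) → ℝ)
    (hG : ∀ j c, ¬ P L m d l j c → G j c = 0) :
    inner2 m d G G = layerNormSq L m d l G := by
  rw [inner2_eq_prod, layerNormSq_eq_prod]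
  refine Finset.sum_congr rfl fun p _ => ?_
  by_cases h : P L m d l p.1 p.2
  · simp [h, sq]
  · simp [h, hG p.1 p.2 h]

/-- norm bound for a weighted sum of matrices all supported on the block -/
lemma norm_wsum_le (l : ℕ) (coef : Fin n → ℝ) (F : Fin n → Fin m → Fin (m + d) → ℝ)
    (M : ℝ) (hM : 0 ≤ M)
    (hF0 : ∀ i j c, ¬ P L m d l j c → F i j c = 0)
    (hFM : ∀ i, Real.sqrt (layerNormSq L m d l (F i)) ≤ M) :
    Real.sqrt (layerNormSq L m d l (fun j c => ∑ i : Fin n, coef i * F i j c)) ≤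
      (∑ i : Fin n, |coef i|) * M := by
  classical
  set A : Fin m → Fin (m + d) → ℝ := fun j c => ∑ i : Fin n, coef i * F i j c with hA
  have hA0 : ∀ j c, ¬ P L m d l j c → A j c = 0 := by
    intro j c h
    simp only [hA]
    exact Finset.sum_eq_zero fun i _ => by rw [hF0 i j c h, mul_zero]
  set S := Real.sqrt (layerNormSq L m d l A) with hS
  have hSnn : 0 ≤ S := Real.sqrt_nonneg _
  have hC : 0 ≤ (∑ i : Fin n, |coef i|) * M :=
    mul_nonneg (Finset.sum_nonneg fun i _ => abs_nonneg _) hM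
  have hsq : S * S = layerNormSq L m d l A :=
    Real.mul_self_sqrt (layerNormSq_nonneg l A)
  have hlin : inner2 m d A A = ∑ i : Fin n, coef i * inner2 m d (F i) A := by
    rw [inner2_eq_prod]
    simp only [hA, Finset.sum_mul]
    rw [Finset.sum_comm]
    refine Finset.sum_congr rfl fun i _ => ?_
    rw [inner2_eq_prod, Finset.mul_sum]
    refine Finset.sum_congr rfl fun p _ => ?_
    ring
  have hbound : layerNormSq L m d l A ≤ ((∑ i : Fin n, |coef i|) * M) * S := by
    rw [← inner2_self l A hA0, hlin]
    calc ∑ i : Fin n, coef i * inner2 m d (F i) A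
        ≤ ∑ i : Fin n, |coef i| * (M * S) := by
          refine Finset.sum_le_sum fun i _ => ?_
          calc coef i * inner2 m d (F i) A ≤ |coef i * inner2 m d (F i) A| := le_abs_self _
            _ = |coef i| * |inner2 m d (F i) A| := abs_mul _ _
            _ ≤ |coef i| * (M * S) := by
                refine mul_le_mul_of_nonneg_left ?_ (abs_nonneg _)
                exact (inner2_CS l (F i) A (hF0 i)).trans
                  (mul_le_mul_of_nonneg_right (hFM i) hSnn)
      _ = ((∑ i : Fin n, |coef i|) * M) * S := by rw [← Finset.sum_mul]; ring
  rcases eq_or_lt_of_le hSnn with h | h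
  · have hz : S = 0 := h.symm
    rw [hz]; exact hC
  · have : S * S ≤ ((∑ i : Fin n, |coef i|) * M) * S := by rw [hsq]; exact hbound
    exact le_of_mul_le_mul_right this h

end KL

namespace KL
open Paper Finset

variable {L m d n : ℕ}

lemma inner2_sub_right (G V1 V2 : Fin m → Fin (m + d) → ℝ) :
    inner2 m d G (V1 - V2) = inner2 m d G V1 - inner2 m d G V2 := by
  unfold inner2
  simp [Pi.sub_apply, mul_sub, Finset.sum_sub_distrib]

lemma inBall_self (W0 : Wts L m d) {τ : ℝ} (hτ : 0 ≤ τ) : inBall L m d W0 W0 τ := by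
  intro l
  have h : layerNormSq L m d (l : ℕ) (W0 l - W0 l) = 0 := by
    rw [layerNormSq_eq]
    apply Finset.sum_eq_zero; intro j _
    apply Finset.sum_eq_zero; intro c _
    simp
  rw [h, Real.sqrt_zero]
  exact hτ

lemma layerNormSq_update (l : ℕ) (η : ℝ) (A g : Fin m → Fin (m + d) → ℝ)
    (hg : ∀ j c, ¬ P L m d l j c → g j c = 0) :
    layerNormSq L m d l (fun j c => A j c - η * g j c) =
      layerNormSq L m d l A - 2 * η * inner2 m d g A + η ^ 2 * inner2 m d g g := by
  rw [layerNormSq_eq_prod, layerNormSq_eq_prod, inner2_eq_prod, inner2_eq_prod,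
      Finset.mul_sum, Finset.mul_sum, ← Finset.sum_sub_distrib, ← Finset.sum_add_distrib]
  refine Finset.sum_congr rfl fun p _ => ?_
  by_cases h : P L m d l p.1 p.2
  · simp only [h, if_pos]; ring
  · simp [h, hg p.1 p.2 h]

lemma sum_swap4 {α β γ δ : Type*} [Fintype α] [Fintype β] [Fintype γ] [Fintype δ]
    (g : α → β → γ → δ → ℝ) :
    ∑ a : α, ∑ b : β, ∑ c : γ, ∑ i : δ, g a b c i
      = ∑ i : δ, ∑ a : α, ∑ b : β, ∑ c : γ, g a b c i := by
  calc ∑ a : α, ∑ b : β, ∑ c : γ, ∑ i : δ, g a b c i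
      = ∑ a : α, ∑ b : β, ∑ i : δ, ∑ c : γ, g a b c i := by
        exact Finset.sum_congr rfl fun a _ => Finset.sum_congr rfl fun b _ =>
          Finset.sum_comm
    _ = ∑ a : α, ∑ i : δ, ∑ b : β, ∑ c : γ, g a b c i := by
        exact Finset.sum_congr rfl fun a _ => Finset.sum_comm
    _ = ∑ i : δ, ∑ a : α, ∑ b : β, ∑ c : γ, g a b c i := Finset.sum_comm

lemma netOut_eq_inner2 (hL : 2 ≤ L) (W : Wts L m d) (x : Fin d → ℝ) :
    netOut L m d W x =
      inner2 m d (gradLayer L m d W x (L - 1)) (W ⟨L - 1, by omega⟩) := by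
  unfold netOut inner2 gradLayer
  simp only [eq_self_iff_true, if_true]
  have hext : extW L m d W (L - 1) = W ⟨L - 1, by omega⟩ := by
    unfold extW; rw [dif_pos (by omega)]
  rw [hext, Finset.mul_sum]
  refine Finset.sum_congr rfl fun j _ => ?_
  by_cases hj : (j : ℕ) = 0
  · rw [Fin.sum_univ_add]
    have h2 : ∀ i : Fin d,
        (if h : (j : ℕ) = 0 ∧ ((Fin.natAdd m i : Fin (m + d)) : ℕ) < m then
          Real.sqrt m * relu (preact m d (extW L m d W) x (L - 2) ⟨((Fin.natAdd m i : Fin (m + d)) : ℕ), h.2⟩)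
        else 0) * W ⟨L - 1, by omega⟩ j (Fin.natAdd m i) = 0 := by
      intro i
      rw [dif_neg, zero_mul]
      intro ⟨_, hlt⟩
      simp [Fin.natAdd] at hlt
    rw [Finset.sum_congr rfl fun i _ => h2 i, Finset.sum_const, smul_zero, add_zero,
        Finset.mul_sum]
    refine Finset.sum_congr rfl fun k _ => ?_
    have hcast : ((Fin.castAdd d k : Fin (m + d)) : ℕ) = (k : ℕ) := rfl
    rw [if_pos hj, dif_pos ⟨hj, by rw [hcast]; exact k.isLt⟩]
    have hcol : (Fin.castAdd d k : Fin (m + d)) = colM m d k := by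
      apply Fin.ext; rfl
    have hfin : (⟨((Fin.castAdd d k : Fin (m + d)) : ℕ), by rw [hcast]; exact k.isLt⟩ : Fin m) = k := by
      apply Fin.ext; exact hcast
    rw [hfin, hcol]
    ring
  · have h1 : ∀ k : Fin m, (if (j : ℕ) = 0 then
        W ⟨L - 1, by omega⟩ j (colM m d k) * relu (preact m d (extW L m d W) x (L - 2) k)
        else 0) = 0 := fun k => if_neg hj
    rw [Finset.sum_congr rfl fun k _ => h1 k, Finset.sum_const, smul_zero, mul_zero]
    symm
    apply Finset.sum_eq_zero; intro c _
    rw [dif_neg, zero_mul]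
    intro ⟨h0, _⟩; exact hj h0

end KL


set_option maxHeartbeats 2000000 in
/-- Lemma 5.1, key technical lemma for GD.
If `W* ∈ B(W0, R m^{-1/2})` attains NTRF loss `ε_NTRF`, the step size satisfies
`η ≤ c·L⁻¹·M(τ)⁻²`, `W* ∈ B(W0, τ)`, and all iterates `W^(0),…,W^(t'-1)` lie in
`B(W0, τ)`, then
`‖W0 − W*‖_F² − ‖W^(t') − W*‖_F² ≥ (3/2 − 4ε_app(τ)) η Σ_{t<t'} L_S(W^(t)) − 2t'ηε_NTRF`;
equivalently, when `ε_app(τ) < 3/8`, the average training loss is bounded by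
`(‖W0 − W*‖² − ‖W^(t') − W*‖² + 2t'ηε_NTRF)/(t'η(3/2 − 4ε_app(τ)))`. -/
theorem key_lemma_gd :
    ∃ c : ℝ, 0 < c ∧
      ∀ (L m d n : ℕ), 2 ≤ L → 1 ≤ m → 1 ≤ d → 1 ≤ n →
      ∀ (X : Fin n → Fin d → ℝ) (Y : Fin n → ℝ),
        (∀ i, ∑ k, (X i k) ^ 2 = 1) →
        (∀ i, Y i = 1 ∨ Y i = -1) →
      ∀ (W0 Wstar : Wts L m d) (R τ η εntrf : ℝ), 0 < τ → 0 < R →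
        inBall L m d W0 Wstar (R / Real.sqrt m) →
        ntrfLoss L m d n X Y W0 Wstar = εntrf →
        0 < η → η ≤ c / ((L : ℝ) * gradBound L m d n X W0 τ ^ 2) →
        inBall L m d W0 Wstar τ →
      ∀ t' : ℕ, 1 ≤ t' →
        (∀ t < t', inBall L m d W0 (gdIter L m d n X Y η W0 t) τ) →
        distSq L m d W0 Wstar - distSq L m d (gdIter L m d n X Y η W0 t') Wstar ≥
            (3 / 2 - 4 * epsApp L m d n X W0 τ) * η *
              ∑ t ∈ Finset.range t', trainLoss L m d n X Y (gdIter L m d n X Y η W0 t)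
            - 2 * (t' : ℝ) * η * εntrf ∧
          (epsApp L m d n X W0 τ < 3 / 8 →
            (1 / (t' : ℝ)) *
                ∑ t ∈ Finset.range t',
                  trainLoss L m d n X Y (gdIter L m d n X Y η W0 t) ≤
              (distSq L m d W0 Wstar -
                  distSq L m d (gdIter L m d n X Y η W0 t') Wstar +
                  2 * (t' : ℝ) * η * εntrf) /
                ((t' : ℝ) * η * (3 / 2 - 4 * epsApp L m d n X W0 τ))) := by
  classical
  refine ⟨1/2, by norm_num, ?_⟩
  intro L m d n hL hm hd hn X Y hX hY W0 Wstar R τ η εntrf hτ hR hWR hNTRF hη hηc hWτ t' ht' hIter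
  by_cases hbdd : BddAbove { e : ℝ | ∃ (i : Fin n) (l : Fin L) (W : Wts L m d),
      inBall L m d W0 W τ ∧
      e = Real.sqrt (layerNormSq L m d (l : ℕ) (gradLayer L m d W (X i) (l : ℕ))) }
  swap
  · exfalso
    have hM0 : gradBound L m d n X W0 τ = 0 := Real.sSup_of_not_bddAbove hbdd
    rw [hM0] at hηc
    norm_num at hηc
    linarith
  -- abbreviations
  set M := gradBound L m d n X W0 τ with hMM
  have hMel : ∀ (i : Fin n) (lf : Fin L) (W : Wts L m d), inBall L m d W0 W τ →
      Real.sqrt (layerNormSq L m d (lf : ℕ) (gradLayer L m d W (X i) (lf : ℕ))) ≤ M :=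
    fun i lf W hW => le_csSup hbdd ⟨i, lf, W, hW, rfl⟩
  have hτ' : 0 ≤ τ := hτ.le
  have hself : inBall L m d W0 W0 τ := KL.inBall_self W0 hτ'
  have hM0 : 0 ≤ M :=
    le_trans (Real.sqrt_nonneg _) (hMel ⟨0, hn⟩ ⟨0, by omega⟩ W0 hself)
  have h1n : (0:ℝ) ≤ 1 / (n:ℝ) := by positivity
  have hnpos : (0:ℝ) < (n:ℝ) := by exact_mod_cast hn
  -- netOut bound on the ball
  set lL : Fin L := ⟨L - 1, by omega⟩ with hlL
  set C0 : ℝ := Real.sqrt (layerNormSq L m d (L - 1) (W0 lL)) with hC0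
  have hC0nn : 0 ≤ C0 := Real.sqrt_nonneg _
  have netB : ∀ (i : Fin n) (W : Wts L m d), inBall L m d W0 W τ →
      |netOut L m d W (X i)| ≤ M * (C0 + τ) := by
    intro i W hW
    rw [KL.netOut_eq_inner2 hL W (X i)]
    have hGz : ∀ j c, ¬ KL.P L m d (L-1) j c → gradLayer L m d W (X i) (L-1) j c = 0 :=
      fun j c h => KL.gradLayer_zero hL W (X i) (L-1) j c h
    have hMg : Real.sqrt (layerNormSq L m d (L-1) (gradLayer L m d W (X i) (L-1))) ≤ M :=
      hMel i lL W hW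
    have hsplit : inner2 m d (gradLayer L m d W (X i) (L-1)) (W ⟨L-1, by omega⟩)
        = inner2 m d (gradLayer L m d W (X i) (L-1)) (W0 lL)
          + inner2 m d (gradLayer L m d W (X i) (L-1)) (W lL - W0 lL) := by
      rw [KL.inner2_sub_right]
      have : (W ⟨L-1, by omega⟩ : Fin m → Fin (m+d) → ℝ) = W lL := rfl
      rw [this]; ring
    rw [hsplit]
    have h1 : |inner2 m d (gradLayer L m d W (X i) (L-1)) (W0 lL)| ≤ M * C0 := by
      refine (KL.inner2_CS (L-1) _ _ hGz).trans ?_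
      exact mul_le_mul hMg (le_of_eq hC0.symm) (Real.sqrt_nonneg _) hM0
    have h2 : |inner2 m d (gradLayer L m d W (X i) (L-1)) (W lL - W0 lL)| ≤ M * τ := by
      refine (KL.inner2_CS (L-1) _ _ hGz).trans ?_
      exact mul_le_mul hMg (hW lL) (Real.sqrt_nonneg _) hM0
    calc |inner2 m d _ (W0 lL) + inner2 m d _ (W lL - W0 lL)|
        ≤ |inner2 m d (gradLayer L m d W (X i) (L-1)) (W0 lL)|
          + |inner2 m d (gradLayer L m d W (X i) (L-1)) (W lL - W0 lL)| := abs_add_le _ _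
      _ ≤ M * C0 + M * τ := add_le_add h1 h2
      _ = M * (C0 + τ) := by ring
  -- gradInner bound on the ball
  have gIB : ∀ (i : Fin n) (W W' : Wts L m d), inBall L m d W0 W τ → inBall L m d W0 W' τ →
      |gradInner L m d W (X i) (W' - W)| ≤ (L:ℝ) * (2*M*τ) := by
    intro i W W' hW hW'
    unfold gradInner
    refine (Finset.abs_sum_le_sum_abs _ _).trans ?_
    have hper : ∀ lf : Fin L,
        |inner2 m d (gradLayer L m d W (X i) (lf:ℕ)) ((W' - W) lf)| ≤ 2*M*τ := by
      intro lf
      have hGz : ∀ j c, ¬ KL.P L m d (lf:ℕ) j c → gradLayer L m d W (X i) (lf:ℕ) j c = 0 :=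
        fun j c h => KL.gradLayer_zero hL W (X i) (lf:ℕ) j c h
      have hWW : (W' - W) lf = (W' lf - W0 lf) - (W lf - W0 lf) := by
        funext j c; simp [Pi.sub_apply]
      rw [hWW, KL.inner2_sub_right]
      have h1 : |inner2 m d (gradLayer L m d W (X i) (lf:ℕ)) (W' lf - W0 lf)| ≤ M * τ :=
        (KL.inner2_CS (lf:ℕ) _ _ hGz).trans
          (mul_le_mul (hMel i lf W hW) (hW' lf) (Real.sqrt_nonneg _) hM0)
      have h2 : |inner2 m d (gradLayer L m d W (X i) (lf:ℕ)) (W lf - W0 lf)| ≤ M * τ :=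
        (KL.inner2_CS (lf:ℕ) _ _ hGz).trans
          (mul_le_mul (hMel i lf W hW) (hW lf) (Real.sqrt_nonneg _) hM0)
      calc |inner2 m d _ (W' lf - W0 lf) - inner2 m d _ (W lf - W0 lf)|
          ≤ |inner2 m d (gradLayer L m d W (X i) (lf:ℕ)) (W' lf - W0 lf)|
            + |inner2 m d (gradLayer L m d W (X i) (lf:ℕ)) (W lf - W0 lf)| := abs_sub _ _
        _ ≤ M * τ + M * τ := add_le_add h1 h2
        _ = 2*M*τ := by ring
    calc ∑ lf : Fin L, |inner2 m d (gradLayer L m d W (X i) (lf:ℕ)) ((W' - W) lf)|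
        ≤ ∑ _lf : Fin L, 2*M*τ := Finset.sum_le_sum fun lf _ => hper lf
      _ = (L:ℝ) * (2*M*τ) := by
          rw [Finset.sum_const, Finset.card_univ, Fintype.card_fin, nsmul_eq_mul]
  -- epsApp is a genuine sup
  have hebdd : BddAbove { e : ℝ | ∃ (i : Fin n) (W W' : Wts L m d),
      inBall L m d W0 W τ ∧ inBall L m d W0 W' τ ∧
      e = |netOut L m d W' (X i) - netOut L m d W (X i) -
            gradInner L m d W (X i) (W' - W)| } := by
    refine ⟨2*(M*(C0+τ)) + (L:ℝ)*(2*M*τ), ?_⟩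
    rintro e ⟨i, W, W', hW, hW', rfl⟩
    have h1 := netB i W hW
    have h2 := netB i W' hW'
    have h3 := gIB i W W' hW hW'
    have h4 : |netOut L m d W' (X i) - netOut L m d W (X i) -
        gradInner L m d W (X i) (W' - W)| ≤
        |netOut L m d W' (X i) - netOut L m d W (X i)| +
        |gradInner L m d W (X i) (W' - W)| := abs_sub _ _
    have h5 : |netOut L m d W' (X i) - netOut L m d W (X i)| ≤
        |netOut L m d W' (X i)| + |netOut L m d W (X i)| := abs_sub _ _
    linarith
  set ε := epsApp L m d n X W0 τ with hεε
  have hεel : ∀ (i : Fin n) (W W' : Wts L m d),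
      inBall L m d W0 W τ → inBall L m d W0 W' τ →
      |netOut L m d W' (X i) - netOut L m d W (X i) -
        gradInner L m d W (X i) (W' - W)| ≤ ε :=
    fun i W W' hW hW' => le_csSup hebdd ⟨i, W, W', hW, hW', rfl⟩
  have hε0 : 0 ≤ ε := le_trans (abs_nonneg _) (hεel ⟨0, hn⟩ W0 W0 hself hself)
  have hTL0 : ∀ W, 0 ≤ trainLoss L m d n X Y W := by
    intro W; unfold trainLoss sampleLoss
    exact mul_nonneg h1n (Finset.sum_nonneg fun i _ => KL.xent_nonneg _)
  set G : ℕ → Wts L m d := gdIter L m d n X Y η W0 with hGdef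
  -- ================== per-step bound ==================
  have step : ∀ t, t < t' →
      distSq L m d (G t) Wstar - distSq L m d (G (t+1)) Wstar ≥
        (3/2 - 4*ε) * η * trainLoss L m d n X Y (G t) - 2*η*εntrf := by
    intro t ht
    have hb : inBall L m d W0 (G t) τ := hIter t ht
    set Wt := G t with hWt
    set g : Fin L → Fin m → Fin (m+d) → ℝ :=
      fun lf => trainLossGrad L m d n X Y Wt (lf:ℕ) with hgg
    have hgz : ∀ (lf : Fin L) (j : Fin m) (c : Fin (m+d)),
        ¬ KL.P L m d (lf:ℕ) j c → g lf j c = 0 := by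
      intro lf j c h
      simp only [hgg]
      unfold trainLossGrad sampleLossGrad
      rw [Finset.sum_eq_zero, mul_zero]
      intro i _
      rw [KL.gradLayer_zero hL Wt (X i) (lf:ℕ) j c h, mul_zero]
    -- one-step expansion
    have hstep_eq : distSq L m d (G (t+1)) Wstar =
        distSq L m d Wt Wstar
          - 2*η*(∑ lf : Fin L, inner2 m d (g lf) (Wt lf - Wstar lf))
          + η^2*(∑ lf : Fin L, inner2 m d (g lf) (g lf)) := by
      unfold distSq
      have hlayer : ∀ lf : Fin L, G (t+1) lf - Wstar lf =
          fun j c => (Wt lf - Wstar lf) j c - η * g lf j c := by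
        intro lf; funext j c
        show gdIter L m d n X Y η W0 (t+1) lf j c - Wstar lf j c = _
        simp only [gdIter, Pi.sub_apply, hgg, hWt, hGdef]
        ring
      calc ∑ lf : Fin L, layerNormSq L m d (lf:ℕ) (G (t+1) lf - Wstar lf)
          = ∑ lf : Fin L, (layerNormSq L m d (lf:ℕ) (Wt lf - Wstar lf)
              - 2*η*inner2 m d (g lf) (Wt lf - Wstar lf)
              + η^2 * inner2 m d (g lf) (g lf)) := by
            refine Finset.sum_congr rfl fun lf _ => ?_
            rw [hlayer lf]
            exact KL.layerNormSq_update (lf:ℕ) η _ _ (hgz lf)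
        _ = _ := by
            rw [Finset.sum_add_distrib, Finset.sum_sub_distrib,
              ← Finset.mul_sum, ← Finset.mul_sum]
    -- inner product identity
    have hIP : (∑ lf : Fin L, inner2 m d (g lf) (Wt lf - Wstar lf)) =
        (1/(n:ℝ)) * ∑ i : Fin n, xent' (Y i * netOut L m d Wt (X i)) * Y i *
          gradInner L m d Wt (X i) (Wt - Wstar) := by
      calc ∑ lf : Fin L, inner2 m d (g lf) (Wt lf - Wstar lf)
          = ∑ lf : Fin L, ∑ j : Fin m, ∑ c : Fin (m+d), ∑ i : Fin n,
              (1/(n:ℝ)) * (xent' (Y i * netOut L m d Wt (X i)) * Y i *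
                (gradLayer L m d Wt (X i) (lf:ℕ) j c * (Wt lf j c - Wstar lf j c))) := by
            refine Finset.sum_congr rfl fun lf _ => ?_
            simp only [hgg]
            unfold inner2 trainLossGrad sampleLossGrad
            refine Finset.sum_congr rfl fun j _ => Finset.sum_congr rfl fun c _ => ?_
            rw [Finset.mul_sum, Finset.sum_mul]
            refine Finset.sum_congr rfl fun i _ => ?_
            simp only [Pi.sub_apply]
            ring
        _ = ∑ i : Fin n, ∑ lf : Fin L, ∑ j : Fin m, ∑ c : Fin (m+d),
              (1/(n:ℝ)) * (xent' (Y i * netOut L m d Wt (X i)) * Y i *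
                (gradLayer L m d Wt (X i) (lf:ℕ) j c * (Wt lf j c - Wstar lf j c))) :=
            KL.sum_swap4 _
        _ = _ := by
            rw [Finset.mul_sum]
            refine Finset.sum_congr rfl fun i _ => ?_
            unfold gradInner inner2
            rw [Finset.mul_sum, Finset.mul_sum]
            refine Finset.sum_congr rfl fun lf _ => ?_
            rw [Finset.mul_sum, Finset.mul_sum]
            refine Finset.sum_congr rfl fun j _ => ?_
            rw [Finset.mul_sum, Finset.mul_sum]
            refine Finset.sum_congr rfl fun c _ => ?_
            simp only [Pi.sub_apply]
            try ring
    -- per-sample convexity bound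
    have per_i : ∀ i : Fin n,
        xent (Y i * netOut L m d Wt (X i)) - xent (Y i * ntrf L m d W0 Wstar (X i))
            - 2*ε*xent (Y i * netOut L m d Wt (X i)) ≤
          xent' (Y i * netOut L m d Wt (X i)) * Y i *
            gradInner L m d Wt (X i) (Wt - Wstar) := by
      intro i
      have hE1 := hεel i Wt Wstar hb hWτ
      have hE2 := hεel i W0 Wstar hself hWτ
      have hneg : gradInner L m d Wt (X i) (Wt - Wstar)
          = - gradInner L m d Wt (X i) (Wstar - Wt) := by
        unfold gradInner
        rw [← Finset.sum_neg_distrib]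
        refine Finset.sum_congr rfl fun lf _ => ?_
        unfold inner2
        rw [← Finset.sum_neg_distrib]
        refine Finset.sum_congr rfl fun j _ => ?_
        rw [← Finset.sum_neg_distrib]
        refine Finset.sum_congr rfl fun c _ => ?_
        simp only [Pi.sub_apply]
        ring
      set a := Y i * netOut L m d Wt (X i) with ha
      set b := Y i * ntrf L m d W0 Wstar (X i) with hbb
      have hYabs : |Y i| = 1 := by rcases hY i with h | h <;> rw [h] <;> norm_num
      set E1 := netOut L m d Wstar (X i) - netOut L m d Wt (X i) -
          gradInner L m d Wt (X i) (Wstar - Wt) with hE1d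
      set E2 := netOut L m d Wstar (X i) - netOut L m d W0 (X i) -
          gradInner L m d W0 (X i) (Wstar - W0) with hE2d
      have hkey : xent' a * Y i * gradInner L m d Wt (X i) (Wt - Wstar)
          = xent' a * (a - b + Y i * (E1 - E2)) := by
        rw [hneg, hE1d, hE2d, ha, hbb]
        unfold ntrf
        ring
      rw [hkey]
      have hδ : |Y i * (E1 - E2)| ≤ 2*ε := by
        rw [abs_mul, hYabs, one_mul]
        calc |E1 - E2| ≤ |E1| + |E2| := abs_sub _ _
          _ ≤ ε + ε := add_le_add hE1 hE2
          _ = 2*ε := by ring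
      have hconv := KL.xent_convex a b
      have hx1 := KL.neg_xent'_le_xent a
      have hx2 := KL.xent'_nonpos a
      have hxnn := KL.xent_nonneg a
      have habs2 : |xent' a * (Y i * (E1 - E2))| ≤ xent a * (2*ε) := by
        rw [abs_mul]
        refine mul_le_mul ?_ hδ (abs_nonneg _) hxnn
        rw [abs_of_nonpos hx2]; exact hx1
      have hlow : xent' a * (Y i * (E1 - E2)) ≥ -(xent a * (2*ε)) :=
        (neg_le_of_abs_le habs2 : _)
      nlinarith [hconv, hlow]
    -- IP lower bound
    have hIPge : (1 - 2*ε) * trainLoss L m d n X Y Wt - εntrf ≤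
        (∑ lf : Fin L, inner2 m d (g lf) (Wt lf - Wstar lf)) := by
      rw [hIP]
      have hsum : ∑ i : Fin n, (xent (Y i * netOut L m d Wt (X i))
            - xent (Y i * ntrf L m d W0 Wstar (X i))
            - 2*ε*xent (Y i * netOut L m d Wt (X i))) ≤
          ∑ i : Fin n, xent' (Y i * netOut L m d Wt (X i)) * Y i *
            gradInner L m d Wt (X i) (Wt - Wstar) :=
        Finset.sum_le_sum fun i _ => per_i i
      have hmul := mul_le_mul_of_nonneg_left hsum h1n
      refine le_trans (le_of_eq ?_) hmul
      unfold trainLoss sampleLoss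
      rw [← hNTRF]
      unfold ntrfLoss
      rw [Finset.sum_sub_distrib, Finset.sum_sub_distrib, ← Finset.mul_sum]
      ring
    -- gradient norm bound
    have hgnorm : ∀ lf : Fin L, Real.sqrt (layerNormSq L m d (lf:ℕ) (g lf)) ≤
        ((1/(n:ℝ)) * ∑ i : Fin n, -xent' (Y i * netOut L m d Wt (X i))) * M := by
      intro lf
      have hrw : g lf = fun j c => ∑ i : Fin n,
          ((1/(n:ℝ)) * (xent' (Y i * netOut L m d Wt (X i)) * Y i)) *
            gradLayer L m d Wt (X i) (lf:ℕ) j c := by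
        funext j c
        simp only [hgg]
        unfold trainLossGrad sampleLossGrad
        rw [Finset.mul_sum]
        refine Finset.sum_congr rfl fun i _ => ?_
        ring
      rw [hrw]
      refine (KL.norm_wsum_le (lf:ℕ) _ _ M hM0
        (fun i j c h => KL.gradLayer_zero hL Wt (X i) (lf:ℕ) j c h)
        (fun i => hMel i lf Wt hb)).trans (le_of_eq ?_)
      congr 1
      rw [Finset.mul_sum]
      refine Finset.sum_congr rfl fun i _ => ?_
      have hYabs : |Y i| = 1 := by rcases hY i with h | h <;> rw [h] <;> norm_num
      rw [abs_mul, abs_mul, hYabs, mul_one, abs_of_nonneg h1n,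
        abs_of_nonpos (KL.xent'_nonpos _)]
    set gbar := (1/(n:ℝ)) * ∑ i : Fin n, -xent' (Y i * netOut L m d Wt (X i)) with hgbar
    have hgbar0 : 0 ≤ gbar :=
      mul_nonneg h1n (Finset.sum_nonneg fun i _ => neg_nonneg.2 (KL.xent'_nonpos _))
    have hgbar1 : gbar ≤ 1 := by
      rw [hgbar]
      have : ∑ i : Fin n, -xent' (Y i * netOut L m d Wt (X i)) ≤ (n:ℝ) := by
        calc ∑ i : Fin n, -xent' (Y i * netOut L m d Wt (X i))
            ≤ ∑ _i : Fin n, (1:ℝ) := Finset.sum_le_sum fun i _ => KL.neg_xent'_le_one _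
          _ = (n:ℝ) := by rw [Finset.sum_const, Finset.card_univ, Fintype.card_fin,
                nsmul_eq_mul, mul_one]
      calc (1/(n:ℝ)) * ∑ i : Fin n, -xent' (Y i * netOut L m d Wt (X i))
          ≤ (1/(n:ℝ)) * (n:ℝ) := mul_le_mul_of_nonneg_left this h1n
        _ = 1 := by field_simp
    have hgbarTL : gbar ≤ trainLoss L m d n X Y Wt := by
      rw [hgbar]
      unfold trainLoss sampleLoss
      exact mul_le_mul_of_nonneg_left
        (Finset.sum_le_sum fun i _ => KL.neg_xent'_le_xent _) h1n
    have hGN : (∑ lf : Fin L, inner2 m d (g lf) (g lf)) ≤ (L:ℝ) * (gbar*M)^2 := by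
      calc ∑ lf : Fin L, inner2 m d (g lf) (g lf)
          = ∑ lf : Fin L, layerNormSq L m d (lf:ℕ) (g lf) :=
            Finset.sum_congr rfl fun lf _ => KL.inner2_self (lf:ℕ) (g lf) (hgz lf)
        _ ≤ ∑ _lf : Fin L, (gbar*M)^2 := by
            refine Finset.sum_le_sum fun lf _ => ?_
            have h := hgnorm lf
            have h2 := Real.sq_sqrt (KL.layerNormSq_nonneg (L := L) (lf:ℕ) (g lf))
            nlinarith [Real.sqrt_nonneg (layerNormSq L m d (lf:ℕ) (g lf)),
              mul_nonneg hgbar0 hM0]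
        _ = (L:ℝ) * (gbar*M)^2 := by
            rw [Finset.sum_const, Finset.card_univ, Fintype.card_fin, nsmul_eq_mul]
    have hGN0 : 0 ≤ ∑ lf : Fin L, inner2 m d (g lf) (g lf) :=
      Finset.sum_nonneg fun lf _ => by
        rw [KL.inner2_self (lf:ℕ) (g lf) (hgz lf)]
        exact KL.layerNormSq_nonneg _ _
    have hη2 : η^2 * (∑ lf : Fin L, inner2 m d (g lf) (g lf)) ≤
        (1/2) * η * trainLoss L m d n X Y Wt := by
      by_cases hM : M = 0
      · have : (∑ lf : Fin L, inner2 m d (g lf) (g lf)) ≤ 0 := by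
          rw [hM] at hGN; simpa using hGN
        nlinarith [hTL0 Wt, hη.le, sq_nonneg η]
      · have hMpos : 0 < M := lt_of_le_of_ne hM0 (Ne.symm hM)
        have hLpos : (0:ℝ) < (L:ℝ) := by exact_mod_cast (by omega : 0 < L)
        have hLM : 0 < (L:ℝ) * M^2 := by positivity
        have hηLM : η * ((L:ℝ) * M^2) ≤ 1/2 := by
          rw [← le_div_iff₀ hLM]; exact hηc
        have e1 : η^2 * (∑ lf : Fin L, inner2 m d (g lf) (g lf)) ≤
            η^2 * ((L:ℝ) * (gbar*M)^2) := mul_le_mul_of_nonneg_left hGN (sq_nonneg η)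
        have e2 : η^2 * ((L:ℝ) * (gbar*M)^2) = (η * ((L:ℝ) * M^2)) * (η * gbar^2) := by
          ring
        have e3 : η * gbar^2 ≤ η * trainLoss L m d n X Y Wt := by
          refine mul_le_mul_of_nonneg_left ?_ hη.le
          nlinarith [hgbar0, hgbar1, hgbarTL]
        have e4 : (η * ((L:ℝ) * M^2)) * (η * gbar^2) ≤
            (1/2) * (η * trainLoss L m d n X Y Wt) := by
          refine mul_le_mul hηLM e3 (by positivity) (by norm_num)
        calc η^2 * (∑ lf : Fin L, inner2 m d (g lf) (g lf))
            ≤ (η * ((L:ℝ) * M^2)) * (η * gbar^2) := by rw [← e2]; exact e1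
          _ ≤ (1/2) * (η * trainLoss L m d n X Y Wt) := e4
          _ = (1/2) * η * trainLoss L m d n X Y Wt := by ring
    -- assemble the step
    have h2η : 2*η*((1 - 2*ε) * trainLoss L m d n X Y Wt - εntrf) ≤
        2*η*(∑ lf : Fin L, inner2 m d (g lf) (Wt lf - Wstar lf)) :=
      mul_le_mul_of_nonneg_left hIPge (by positivity)
    have hid : 2*η*((1 - 2*ε) * trainLoss L m d n X Y Wt - εntrf)
        - (1/2) * η * trainLoss L m d n X Y Wt
        = (3/2 - 4*ε) * η * trainLoss L m d n X Y Wt - 2*η*εntrf := by ring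
    rw [ge_iff_le, hstep_eq]
    linarith [h2η, hη2, hid]
  -- ================== telescoping ==================
  have tele := Finset.sum_range_sub' (fun t => distSq L m d (G t) Wstar) t'
  have hsum_ge : ∑ t ∈ Finset.range t',
        ((3/2 - 4*ε) * η * trainLoss L m d n X Y (G t) - 2*η*εntrf) ≤
      ∑ t ∈ Finset.range t',
        (distSq L m d (G t) Wstar - distSq L m d (G (t+1)) Wstar) :=
    Finset.sum_le_sum fun t htm => step t (Finset.mem_range.1 htm)
  have hsum_eq : ∑ t ∈ Finset.range t',
        ((3/2 - 4*ε) * η * trainLoss L m d n X Y (G t) - 2*η*εntrf)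
      = (3/2 - 4*ε) * η *
          (∑ t ∈ Finset.range t', trainLoss L m d n X Y (G t))
        - 2*(t':ℝ)*η*εntrf := by
    rw [Finset.sum_sub_distrib, ← Finset.mul_sum, Finset.sum_const,
      Finset.card_range, nsmul_eq_mul]
    ring
  have hG0 : G 0 = W0 := rfl
  have hmain : distSq L m d W0 Wstar - distSq L m d (G t') Wstar ≥
      (3/2 - 4*ε) * η * (∑ t ∈ Finset.range t', trainLoss L m d n X Y (G t))
        - 2*(t':ℝ)*η*εntrf := by
    rw [← hG0, ← tele, ← hsum_eq]
    exact hsum_ge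
  refine ⟨by rw [ge_iff_le]; convert hmain using 2 <;> ring, ?_⟩
  intro hε38
  have hq : (0:ℝ) < 3/2 - 4*ε := by linarith
  have ht'pos : (0:ℝ) < (t':ℝ) := by exact_mod_cast ht'
  have hden : (0:ℝ) < (t':ℝ) * η * (3/2 - 4*ε) := by positivity
  rw [le_div_iff₀ hden]
  have hid2 : 1 / (t':ℝ) *
      (∑ t ∈ Finset.range t', trainLoss L m d n X Y (G t)) *
      ((t':ℝ) * η * (3/2 - 4*ε)) =
      (3/2 - 4*ε) * η * (∑ t ∈ Finset.range t', trainLoss L m d n X Y (G t)) := by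
    field_simp
  rw [hid2]
  linarith [hmain]
end
end

section
/- Let W* ∈ B(W^(0), R·m^{−1/2}) satisfy (1/n) Σ_{i=1}^n ℓ(y_i F_{W^(0),W*}(x_i)) = ε_NTRF (with respect to the n streamed examples), and let τ > 0. There is an absolute constant c > 0 such that if the SGD step size satisfies η ≤ c·L^{−1}·M(τ)^{−2}, W* ∈ B(W^(0), τ), and the SGD iterates satisfy W^(i) ∈ B(W^(0), τ) for all 0 ≤ i ≤ n−1, then for every 1 ≤ n' ≤ n: ‖W^(0) − W*‖_F² − ‖W^(n') − W*‖_F² ≥ (3/2 − 4 ε_app(τ)) · η · Σ_{i=1}^{n'} L_i(W^(i−1)) − 2 n η ε_NTRF. -/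
open MeasureTheory ProbabilityTheory Real
open scoped BigOperators ENNReal NNReal

noncomputable section

open Paper

/-!
Expanding the square, an SGD step on `(x, y)` from `W` decreases `‖W − W*‖²` by
`2ηs·y⟨∇f_W(x), W* − W⟩ − η²s²‖∇f_W(x)‖²`, where `s = −ℓ'(y f_W(x))` satisfies
`0 < s ≤ min 1 (ℓ(y f_W(x)))`. As `f_{W*}(x)` lies within `ε_app` both of
`f_W(x) + ⟨∇f_W(x), W* − W⟩` and of `F_{W⁰,W*}(x)`, the tangent-line inequality of the convex
loss bounds the first term below by `2η(ℓ(y f_W(x)) − ℓ(y F_{W⁰,W*}(x)) − 2ε_app ℓ(y f_W(x)))`,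
while `η L M(τ)² ≤ 1/2` bounds the second by `η ℓ(y f_W(x)) / 2`. Summing over the first `n'`
steps telescopes, and their NTRF losses add up to at most `n ε_NTRF`.
-/

lemma xent_nonneg (z : ℝ) : 0 ≤ xent z :=
  Real.log_nonneg (by linarith [Real.exp_pos (-z)])

lemma xent'_eq_neg_negXent' (z : ℝ) : xent' z = -negXent' z := rfl

lemma negXent'_pos (z : ℝ) : 0 < negXent' z := by
  unfold negXent'; positivity

lemma negXent'_le_one (z : ℝ) : negXent' z ≤ 1 := by
  rw [negXent', div_le_one (by positivity)]
  linarith [Real.exp_pos z]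

lemma negXent'_le_xent (z : ℝ) : negXent' z ≤ xent z := by
  have h := Real.one_sub_inv_le_log_of_pos (x := 1 + Real.exp (-z)) (by positivity)
  have hz : negXent' z = 1 - (1 + Real.exp (-z))⁻¹ := by
    rw [negXent', Real.exp_neg]
    field_simp
    ring
  rwa [hz]

lemma hasDerivAt_xent (z : ℝ) : HasDerivAt xent (xent' z) z := by
  have h := (((hasDerivAt_id z).neg.exp).const_add 1).log (by positivity)
  convert h using 1
  · rfl
  · simp only [xent', Pi.neg_apply, id, Real.exp_neg]
    field_simp
    ring

lemma monotone_xent' : Monotone xent' := fun a b hab => by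
  rw [xent', xent', neg_le_neg_iff]
  gcongr

lemma xent_add_xent'_mul_sub_le (a b : ℝ) : xent a + xent' a * (b - a) ≤ xent b := by
  have hcont : Continuous xent :=
    continuous_iff_continuousAt.2 fun z => (hasDerivAt_xent z).continuousAt
  rcases lt_trichotomy a b with hab | rfl | hab
  · obtain ⟨ξ, hξ, hslope⟩ := exists_hasDerivAt_eq_slope xent xent' hab hcont.continuousOn
      fun z _ => hasDerivAt_xent z
    have h := monotone_xent' hξ.1.le
    rw [hslope, le_div_iff₀ (by linarith)] at h
    linarith
  · simp
  · obtain ⟨ξ, hξ, hslope⟩ := exists_hasDerivAt_eq_slope xent xent' hab hcont.continuousOn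
      fun z _ => hasDerivAt_xent z
    have h := monotone_xent' hξ.2.le
    rw [hslope, div_le_iff₀ (by linarith)] at h
    linarith

section Blocks

variable {L m d : ℕ}

abbrev InBlock (L m d l : ℕ) (j : Fin m) (c : Fin (m + d)) : Prop :=
  (j : ℕ) < rowsOf L m l ∧ (c : ℕ) < colsOf m d l

lemma sq_le_layerNormSq {l : ℕ} (A : Fin m → Fin (m + d) → ℝ) {j : Fin m} {c : Fin (m + d)}
    (h : InBlock L m d l j c) : A j c ^ 2 ≤ layerNormSq L m d l A := by
  have hnn : ∀ j' c', 0 ≤ if InBlock L m d l j' c' then A j' c' ^ 2 else 0 :=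
    fun _ _ => by split <;> positivity
  calc A j c ^ 2 = if InBlock L m d l j c then A j c ^ 2 else 0 := (if_pos h).symm
    _ ≤ ∑ c', if InBlock L m d l j c' then A j c' ^ 2 else 0 :=
      Finset.single_le_sum (fun c' _ => hnn j c') (Finset.mem_univ c)
    _ ≤ layerNormSq L m d l A :=
      Finset.single_le_sum (f := fun j' => ∑ c', if InBlock L m d l j' c' then A j' c' ^ 2 else 0)
        (fun j' _ => Finset.sum_nonneg fun c' _ => hnn j' c') (Finset.mem_univ j)

lemma abs_le_sqrt_layerNormSq {l : ℕ} (A : Fin m → Fin (m + d) → ℝ) {j : Fin m}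
    {c : Fin (m + d)} (h : InBlock L m d l j c) : |A j c| ≤ √(layerNormSq L m d l A) :=
  Real.abs_le_sqrt (sq_le_layerNormSq A h)

lemma abs_sub_le_of_inBall {W0 W : Wts L m d} {τ : ℝ} (hW : inBall L m d W0 W τ) (l : Fin L)
    {j : Fin m} {c : Fin (m + d)} (h : InBlock L m d l j c) : |W l j c - W0 l j c| ≤ τ :=
  (abs_le_sqrt_layerNormSq (W l - W0 l) h).trans (hW l)

lemma abs_le_of_inBall {W0 W : Wts L m d} {τ K : ℝ} (hK : ∀ l j c, |W0 l j c| ≤ K)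
    (hW : inBall L m d W0 W τ) (l : Fin L) {j : Fin m} {c : Fin (m + d)}
    (h : InBlock L m d l j c) : |W l j c| ≤ K + τ := by
  have := abs_sub_abs_le_abs_sub (W l j c) (W0 l j c)
  linarith [abs_sub_le_of_inBall hW l h, hK l j c]

lemma abs_sub_le_two_mul_of_inBall {W0 W W' : Wts L m d} {τ : ℝ} (hW : inBall L m d W0 W τ)
    (hW' : inBall L m d W0 W' τ) (l : Fin L) {j : Fin m} {c : Fin (m + d)}
    (h : InBlock L m d l j c) : |W' l j c - W l j c| ≤ 2 * τ := by
  have := abs_sub (W' l j c - W0 l j c) (W l j c - W0 l j c)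
  rw [sub_sub_sub_cancel_right] at this
  linarith [abs_sub_le_of_inBall hW l h, abs_sub_le_of_inBall hW' l h]

lemma inBall_refl (W0 : Wts L m d) {τ : ℝ} (hτ : 0 ≤ τ) : inBall L m d W0 W0 τ :=
  fun l => by simp [layerNormSq, hτ]

lemma abs_inner2_le {l : ℕ} {G V : Fin m → Fin (m + d) → ℝ} {a b : ℝ}
    (hG0 : ∀ j c, ¬InBlock L m d l j c → G j c = 0) (hG : ∀ j c, |G j c| ≤ a)
    (hV : ∀ j c, InBlock L m d l j c → |V j c| ≤ b) (hb : 0 ≤ b) :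
    |inner2 m d G V| ≤ m * (m + d) * (a * b) := by
  have hterm : ∀ j c, |G j c * V j c| ≤ a * b := fun j c => by
    have ha : 0 ≤ a := (abs_nonneg _).trans (hG j c)
    by_cases h : InBlock L m d l j c
    · rw [abs_mul]
      exact mul_le_mul (hG j c) (hV j c h) (abs_nonneg _) ha
    · rw [hG0 j c h, zero_mul, abs_zero]
      positivity
  calc |inner2 m d G V| ≤ ∑ j, ∑ c, |G j c * V j c| :=
        (Finset.abs_sum_le_sum_abs _ _).trans
          (Finset.sum_le_sum fun j _ => Finset.abs_sum_le_sum_abs _ _)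
    _ ≤ ∑ _j : Fin m, ∑ _c : Fin (m + d), a * b := by gcongr with j _ c _; exact hterm j c
    _ = m * (m + d) * (a * b) := by simp; ring

lemma layerNormSq_sub_mul {l : ℕ} (A G : Fin m → Fin (m + d) → ℝ) (t : ℝ)
    (hG0 : ∀ j c, ¬InBlock L m d l j c → G j c = 0) :
    layerNormSq L m d l (fun j c => A j c - t * G j c) =
      layerNormSq L m d l A - 2 * t * inner2 m d G A + t ^ 2 * layerNormSq L m d l G := by
  simp only [layerNormSq, inner2, Finset.mul_sum, ← Finset.sum_sub_distrib,
    ← Finset.sum_add_distrib]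
  refine Finset.sum_congr rfl fun j _ => Finset.sum_congr rfl fun c _ => ?_
  by_cases h : InBlock L m d l j c
  · simp only [if_pos h]; ring
  · simp only [if_neg h, hG0 j c h]; ring

end Blocks

section Network

variable {L m d : ℕ}

lemma gradLayer_eq_zero_of_not_inBlock (hL : 2 ≤ L) (W : Wts L m d) (x : Fin d → ℝ) {l : ℕ}
    {j : Fin m} {c : Fin (m + d)} (h : ¬InBlock L m d l j c) : gradLayer L m d W x l j c = 0 := by
  simp only [InBlock, rowsOf, colsOf] at h
  simp only [gradLayer]
  split_ifs at h ⊢ <;> first | rfl | omega | simp_all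

lemma netOut_eq_inner2_gradLayer (hL : 2 ≤ L) (W : Wts L m d) (x : Fin d → ℝ) :
    netOut L m d W x = inner2 m d (gradLayer L m d W x (L - 1)) (W ⟨L - 1, by omega⟩) := by
  simp only [netOut, inner2, gradLayer, if_pos, extW, dif_pos (show L - 1 < L by omega),
    Finset.mul_sum, Fin.sum_univ_add]
  refine Finset.sum_congr rfl fun j _ => ?_
  by_cases hj : (j : ℕ) = 0
  · have hcol : ∀ k, colM m d k = Fin.castAdd d k := fun _ => rfl
    simp only [hj, hcol, if_true, true_and, Fin.val_castAdd, Fin.is_lt, dif_pos,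
      Fin.val_natAdd, add_lt_iff_neg_left, not_lt_zero, dif_neg, not_false_eq_true, zero_mul,
      Finset.sum_const_zero, add_zero]
    exact Finset.sum_congr rfl fun k _ => by ring
  · simp [hj]

lemma gradInner_sub_comm (W : Wts L m d) (x : Fin d → ℝ) (A B : Wts L m d) :
    gradInner L m d W x (A - B) = -gradInner L m d W x (B - A) := by
  rw [← neg_sub]
  simp only [gradInner, inner2, Pi.neg_apply, mul_neg, Finset.sum_neg_distrib]

lemma distSq_eq_of_gradLayer_step (hL : 2 ≤ L) {W W' Wstar : Wts L m d} {x : Fin d → ℝ} {t : ℝ}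
    (hW' : ∀ l j c, W' l j c = W l j c - t * gradLayer L m d W x l j c) :
    distSq L m d W' Wstar = distSq L m d W Wstar - 2 * t * gradInner L m d W x (W - Wstar) +
      t ^ 2 * ∑ l : Fin L, layerNormSq L m d l (gradLayer L m d W x l) := by
  have hsub : ∀ l, W' l - Wstar l =
      fun j c => (W l - Wstar l) j c - t * gradLayer L m d W x l j c := fun l => by
    funext j c
    simp only [Pi.sub_apply, hW']
    ring
  simp only [distSq, gradInner, hsub, layerNormSq_sub_mul _ _ t
    (fun j c h => gradLayer_eq_zero_of_not_inBlock hL W x h), Finset.sum_add_distrib,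
    Finset.sum_sub_distrib, Finset.mul_sum]
  rfl

lemma distSq_sub_distSq_of_sgd_step (hL : 2 ≤ L) {W Wstar W' : Wts L m d} {x : Fin d → ℝ}
    {y η : ℝ} (hy2 : y ^ 2 = 1)
    (hW' : ∀ l j c, W' l j c = W l j c - η * sampleLossGrad L m d x y W (l : ℕ) j c) :
    distSq L m d W Wstar - distSq L m d W' Wstar =
      2 * η * (negXent' (y * netOut L m d W x) * (y * gradInner L m d W x (Wstar - W))) -
        η ^ 2 * (negXent' (y * netOut L m d W x) ^ 2 *
          ∑ l : Fin L, layerNormSq L m d l (gradLayer L m d W x l)) := by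
  rw [distSq_eq_of_gradLayer_step (W' := W') (x := x) hL
    (t := η * (xent' (y * netOut L m d W x) * y)) fun l j c => by rw [hW', sampleLossGrad]; ring,
    gradInner_sub_comm, xent'_eq_neg_negXent']
  linear_combination (-η ^ 2 * negXent' (y * netOut L m d W x) ^ 2 *
    ∑ l : Fin L, layerNormSq L m d l (gradLayer L m d W x l)) * hy2

end Network

section Suprema

variable {L m d n : ℕ} {X : Fin n → Fin d → ℝ} {W0 : Wts L m d} {τ : ℝ}

lemma mul_gradBound_sq_pos_of_le_div {c η : ℝ} (hη : 0 < η)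
    (hηc : η ≤ c / ((L : ℝ) * gradBound L m d n X W0 τ ^ 2)) :
    0 < (L : ℝ) * gradBound L m d n X W0 τ ^ 2 := by
  refine lt_of_le_of_ne (by positivity) fun h => ?_
  rw [← h, div_zero] at hηc
  linarith

/-- If the set defining `M(τ)` were unbounded, `M(τ)` would be the junk value `0`. -/
lemma gradNorm_le_gradBound (hM : gradBound L m d n X W0 τ ≠ 0) (i : Fin n) (l : Fin L)
    (W : Wts L m d) (hW : inBall L m d W0 W τ) :
    √(layerNormSq L m d l (gradLayer L m d W (X i) l)) ≤ gradBound L m d n X W0 τ := by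
  have hbdd : BddAbove {e : ℝ | ∃ (i : Fin n) (l : Fin L) (W : Wts L m d),
      inBall L m d W0 W τ ∧ e = √(layerNormSq L m d l (gradLayer L m d W (X i) l))} := by
    by_contra h
    exact hM (Real.sSup_of_not_bddAbove h)
  exact le_csSup hbdd ⟨i, l, W, hW, rfl⟩

variable {M : ℝ}

lemma abs_gradLayer_le (hL : 2 ≤ L) {W : Wts L m d} {x : Fin d → ℝ} {l : ℕ}
    (hM : √(layerNormSq L m d l (gradLayer L m d W x l)) ≤ M) (j : Fin m) (c : Fin (m + d)) :
    |gradLayer L m d W x l j c| ≤ M := by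
  by_cases h : InBlock L m d l j c
  · exact (abs_le_sqrt_layerNormSq _ h).trans hM
  · rw [gradLayer_eq_zero_of_not_inBlock hL W x h, abs_zero]
    exact (Real.sqrt_nonneg _).trans hM

lemma abs_inner2_gradLayer_le (hL : 2 ≤ L) {W : Wts L m d} {x : Fin d → ℝ} {l : ℕ}
    (hM : √(layerNormSq L m d l (gradLayer L m d W x l)) ≤ M) {V : Fin m → Fin (m + d) → ℝ}
    {b : ℝ} (hV : ∀ j c, InBlock L m d l j c → |V j c| ≤ b) (hb : 0 ≤ b) :
    |inner2 m d (gradLayer L m d W x l) V| ≤ m * (m + d) * (M * b) :=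
  abs_inner2_le (fun _ _ h => gradLayer_eq_zero_of_not_inBlock hL W x h)
    (abs_gradLayer_le hL hM) hV hb

/-- Because `f_W` is linear in its last layer, `f_W(x) = ⟨∇_{W_L} f_W(x), W_L⟩`, so bounded
gradients already bound the network output on the ball. -/
lemma bddAbove_linearizationError (hL : 2 ≤ L) (hτ : 0 ≤ τ)
    (hM : ∀ (i : Fin n) (l : Fin L) (W : Wts L m d), inBall L m d W0 W τ →
      √(layerNormSq L m d l (gradLayer L m d W (X i) l)) ≤ M) :
    BddAbove {e : ℝ | ∃ (i : Fin n) (W W' : Wts L m d),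
      inBall L m d W0 W τ ∧ inBall L m d W0 W' τ ∧
      e = |netOut L m d W' (X i) - netOut L m d W (X i) - gradInner L m d W (X i) (W' - W)|} := by
  obtain ⟨K, hK⟩ := Finite.exists_le fun p : Fin L × Fin m × Fin (m + d) => |W0 p.1 p.2.1 p.2.2|
  have hK' : ∀ l j c, |W0 l j c| ≤ |K| := fun l j c => (hK (l, j, c)).trans (le_abs_self K)
  have hout : ∀ i W, inBall L m d W0 W τ →
      |netOut L m d W (X i)| ≤ m * (m + d) * (M * (|K| + τ)) := fun i W hW => by
    rw [netOut_eq_inner2_gradLayer hL]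
    exact abs_inner2_gradLayer_le hL (hM i ⟨L - 1, by omega⟩ W hW)
      (fun _ _ h => abs_le_of_inBall hK' hW _ h) (by positivity)
  have hlin : ∀ i W W', inBall L m d W0 W τ → inBall L m d W0 W' τ →
      |gradInner L m d W (X i) (W' - W)| ≤ L * (m * (m + d) * (M * (2 * τ))) := by
    intro i W W' hW hW'
    calc |gradInner L m d W (X i) (W' - W)|
        ≤ ∑ _l : Fin L, (m * (m + d) * (M * (2 * τ)) : ℝ) :=
          (Finset.abs_sum_le_sum_abs _ _).trans <| Finset.sum_le_sum fun l _ =>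
            abs_inner2_gradLayer_le hL (hM i l W hW)
              (fun _ _ h => abs_sub_le_two_mul_of_inBall hW hW' l h) (by positivity)
      _ = L * (m * (m + d) * (M * (2 * τ))) := by simp
  refine ⟨2 * (m * (m + d) * (M * (|K| + τ))) + L * (m * (m + d) * (M * (2 * τ))), ?_⟩
  rintro e ⟨i, W, W', hW, hW', rfl⟩
  calc _ ≤ |netOut L m d W' (X i)| + |netOut L m d W (X i)| +
        |gradInner L m d W (X i) (W' - W)| :=
        (abs_sub _ _).trans (add_le_add_left (abs_sub _ _) _)
    _ ≤ _ := by linarith [hout i W hW, hout i W' hW', hlin i W W' hW hW']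

lemma linearizationError_le_epsApp (hL : 2 ≤ L) (hτ : 0 ≤ τ)
    (hM : ∀ (i : Fin n) (l : Fin L) (W : Wts L m d), inBall L m d W0 W τ →
      √(layerNormSq L m d l (gradLayer L m d W (X i) l)) ≤ M)
    (i : Fin n) {W W' : Wts L m d} (hW : inBall L m d W0 W τ) (hW' : inBall L m d W0 W' τ) :
    |netOut L m d W' (X i) - netOut L m d W (X i) - gradInner L m d W (X i) (W' - W)| ≤
      epsApp L m d n X W0 τ :=
  le_csSup (bddAbove_linearizationError hL hτ hM) ⟨i, W, W', hW, hW', rfl⟩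

end Suprema

section Step

variable {L m d : ℕ}

theorem le_distSq_sub_distSq_of_sgd_step (hL : 2 ≤ L) {W0 Wstar W W' : Wts L m d}
    {x : Fin d → ℝ} {y η M ε : ℝ} (hy : y = 1 ∨ y = -1) (hη : 0 < η) (hηM : η * (L * M ^ 2) ≤ 1 / 2)
    (hM : ∀ l : Fin L, √(layerNormSq L m d l (gradLayer L m d W x l)) ≤ M) (hε : 0 ≤ ε)
    (hlin : |netOut L m d Wstar x - netOut L m d W x - gradInner L m d W x (Wstar - W)| ≤ ε)
    (hlin0 :
      |netOut L m d Wstar x - netOut L m d W0 x - gradInner L m d W0 x (Wstar - W0)| ≤ ε)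
    (hW' : ∀ l j c, W' l j c = W l j c - η * sampleLossGrad L m d x y W (l : ℕ) j c) :
    (3 / 2 - 4 * ε) * η * sampleLoss L m d W x y - 2 * η * xent (y * ntrf L m d W0 Wstar x) ≤
      distSq L m d W Wstar - distSq L m d W' Wstar := by
  have hy2 : y ^ 2 = 1 := by rcases hy with rfl | rfl <;> norm_num
  have hyabs : |y| = 1 := by rcases hy with rfl | rfl <;> norm_num
  have hdist := distSq_sub_distSq_of_sgd_step (Wstar := Wstar) hL hy2 hW'
  have hF : y * ntrf L m d W0 Wstar x =
      y * netOut L m d W0 x + y * gradInner L m d W0 x (Wstar - W0) := by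
    rw [ntrf, mul_add]
  rw [hdist, sampleLoss]
  set z := y * netOut L m d W x
  set s := negXent' z
  set g := y * gradInner L m d W x (Wstar - W)
  set F := y * ntrf L m d W0 Wstar x
  set G2 := ∑ l : Fin L, layerNormSq L m d l (gradLayer L m d W x l)
  have hlinear : F - z - 2 * ε ≤ g := by
    have e1 : y * (netOut L m d Wstar x - netOut L m d W x - gradInner L m d W x (Wstar - W))
        ≤ ε := (le_abs_self _).trans (by rwa [abs_mul, hyabs, one_mul])
    have e2 : -(y * (netOut L m d Wstar x - netOut L m d W0 x -
        gradInner L m d W0 x (Wstar - W0))) ≤ ε :=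
      (neg_le_abs _).trans (by rwa [abs_mul, hyabs, one_mul])
    linarith
  have htangent : xent z - s * (F - z) ≤ xent F := by
    have h := xent_add_xent'_mul_sub_le z F
    rw [xent'_eq_neg_negXent'] at h
    linarith
  have hG2 : G2 ≤ L * M ^ 2 := by
    calc G2 ≤ ∑ _l : Fin L, M ^ 2 := Finset.sum_le_sum fun l _ => (Real.sqrt_le_iff.1 (hM l)).2
      _ = L * M ^ 2 := by simp
  have hs0 : 0 < s := negXent'_pos z
  have hs1 : s ≤ 1 := negXent'_le_one z
  have hsz : s ≤ xent z := negXent'_le_xent z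
  have hsg : xent z - xent F - 2 * ε * xent z ≤ s * g := by
    have h1 := mul_le_mul_of_nonneg_left hlinear hs0.le
    have h2 := mul_le_mul_of_nonneg_right hsz hε
    linarith
  have hsq : η ^ 2 * (s ^ 2 * G2) ≤ η * xent z / 2 := by
    calc η ^ 2 * (s ^ 2 * G2) ≤ η ^ 2 * (s ^ 2 * (L * M ^ 2)) := by gcongr
      _ = (η * (L * M ^ 2)) * (η * s ^ 2) := by ring
      _ ≤ 1 / 2 * (η * s) := by gcongr; nlinarith
      _ ≤ η * xent z / 2 := by nlinarith
  nlinarith [mul_le_mul_of_nonneg_left hsg (by positivity : (0 : ℝ) ≤ 2 * η)]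

end Step

lemma extS_of_lt {n d : ℕ} (S : Fin n → (Fin d → ℝ) × ℝ) {i : ℕ} (h : i < n) :
    extS n d S i = S ⟨i, h⟩ :=
  dif_pos h

lemma sum_range_xent_ntrf_le {L m d n n' : ℕ} (S : Fin n → (Fin d → ℝ) × ℝ)
    (W0 Wstar : Wts L m d) (hn' : n' ≤ n) :
    ∑ i ∈ Finset.range n', xent ((extS n d S i).2 * ntrf L m d W0 Wstar (extS n d S i).1) ≤
      n * ntrfLoss L m d n (fun i => (S i).1) (fun i => (S i).2) W0 Wstar := by
  calc _ ≤ ∑ i ∈ Finset.range n, xent ((extS n d S i).2 * ntrf L m d W0 Wstar (extS n d S i).1) :=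
        Finset.sum_le_sum_of_subset_of_nonneg (Finset.range_subset_range.2 hn')
          fun _ _ _ => xent_nonneg _
    _ = ∑ i : Fin n, xent ((S i).2 * ntrf L m d W0 Wstar (S i).1) := by
        rw [← Fin.sum_univ_eq_sum_range]
        simp only [extS_of_lt _ (Fin.is_lt _)]
    _ = n * ntrfLoss L m d n (fun i => (S i).1) (fun i => (S i).2) W0 Wstar := by
        rcases Nat.eq_zero_or_pos n with rfl | hn
        · simp
        · rw [ntrfLoss, ← mul_assoc, mul_one_div_cancel (by positivity), one_mul]

/-- Lemma A.2, key technical lemma for online SGD.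
If `W* ∈ B(W0, R m^{-1/2})` attains NTRF loss `ε_NTRF` on the `n` streamed examples,
the step size satisfies `η ≤ c·L⁻¹·M(τ)⁻²`, `W* ∈ B(W0, τ)`, and all SGD iterates
`W^(0),…,W^(n-1)` lie in `B(W0, τ)`, then for every `1 ≤ n' ≤ n`:
`‖W0 − W*‖_F² − ‖W^(n') − W*‖_F² ≥ (3/2 − 4ε_app(τ)) η Σ_{i=1}^{n'} L_i(W^(i-1)) − 2nηε_NTRF`. -/
theorem key_lemma_sgd :
    ∃ c : ℝ, 0 < c ∧
      ∀ (L m d n : ℕ), 2 ≤ L → 1 ≤ m → 1 ≤ d → 1 ≤ n →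
      ∀ (S : Fin n → (Fin d → ℝ) × ℝ),
        (∀ i, ∑ k, ((S i).1 k) ^ 2 = 1) →
        (∀ i, (S i).2 = 1 ∨ (S i).2 = -1) →
      ∀ (W0 Wstar : Wts L m d) (R τ η εntrf : ℝ), 0 < τ → 0 < R →
        inBall L m d W0 Wstar (R / Real.sqrt m) →
        ntrfLoss L m d n (fun i => (S i).1) (fun i => (S i).2) W0 Wstar = εntrf →
        0 < η →
        η ≤ c / ((L : ℝ) * gradBound L m d n (fun i => (S i).1) W0 τ ^ 2) →
        inBall L m d W0 Wstar τ →
        (∀ i < n, inBall L m d W0 (sgdIter L m d (extS n d S) η W0 i) τ) →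
      ∀ n', 1 ≤ n' → n' ≤ n →
        distSq L m d W0 Wstar -
            distSq L m d (sgdIter L m d (extS n d S) η W0 n') Wstar ≥
          (3 / 2 - 4 * epsApp L m d n (fun i => (S i).1) W0 τ) * η *
              ∑ i ∈ Finset.range n',
                sampleLoss L m d (sgdIter L m d (extS n d S) η W0 i)
                  (extS n d S i).1 (extS n d S i).2
            - 2 * (n : ℝ) * η * εntrf := by
  refine ⟨1 / 2, by norm_num, ?_⟩
  intro L m d n hL _ _ hn S _ hy W0 Wstar R τ η εntrf hτ _ _ hεntrf hη hηc hWstar hiter n' _ hn'n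
  set W := sgdIter L m d (extS n d S) η W0
  have hpos := mul_gradBound_sq_pos_of_le_div hη hηc
  have hM0 : gradBound L m d n (fun i => (S i).1) W0 τ ≠ 0 := fun h => by simp [h] at hpos
  have hM := gradNorm_le_gradBound hM0
  have hηM := (le_div_iff₀ hpos).1 hηc
  have hlin := linearizationError_le_epsApp hL hτ.le hM
  have hε := (abs_nonneg _).trans (hlin ⟨0, hn⟩ (inBall_refl W0 hτ.le) (inBall_refl W0 hτ.le))
  have hstep : ∀ i ∈ Finset.range n',
      (3 / 2 - 4 * epsApp L m d n (fun i => (S i).1) W0 τ) * η *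
          sampleLoss L m d (W i) (extS n d S i).1 (extS n d S i).2 -
        2 * η * xent ((extS n d S i).2 * ntrf L m d W0 Wstar (extS n d S i).1) ≤
      distSq L m d (W i) Wstar - distSq L m d (W (i + 1)) Wstar := fun i hi => by
    have hin : i < n := (Finset.mem_range.1 hi).trans_le hn'n
    have hnext : ∀ l j c, W (i + 1) l j c =
        W i l j c - η * sampleLossGrad L m d (S ⟨i, hin⟩).1 (S ⟨i, hin⟩).2 (W i) l j c :=
      fun l j c => by rw [← extS_of_lt S hin]; rfl
    rw [extS_of_lt S hin]
    exact le_distSq_sub_distSq_of_sgd_step hL (hy ⟨i, hin⟩) hη hηM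
      (fun l => hM _ l _ (hiter i hin)) hε (hlin _ (hiter i hin) hWstar)
      (hlin _ (inBall_refl W0 hτ.le) hWstar) hnext
  have hntrf := mul_le_mul_of_nonneg_left (hεntrf ▸ sum_range_xent_ntrf_le S W0 Wstar hn'n)
    (by positivity : (0 : ℝ) ≤ 2 * η)
  refine le_trans ?_ ((Finset.sum_le_sum hstep).trans_eq
    (Finset.sum_range_sub' (fun i => distSq L m d (W i) Wstar) n'))
  rw [Finset.sum_sub_distrib, ← Finset.mul_sum, ← Finset.mul_sum]
  linarith
end
end

section
/- Let τ > 0 and suppose W and W* both lie in B(W^(0), τ). Then for every training index i ∈ [n]: ⟨W − W*, ∇_W L_i(W)⟩ ≥ (1 − 2 ε_app(τ)) · ℓ(y_i f_W(x_i)) − ℓ(y_i F_{W^(0),W*}(x_i)). -/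
open MeasureTheory ProbabilityTheory Real
open scoped BigOperators ENNReal NNReal

noncomputable section

namespace Paper

/-!
Write `z = y f_W(x)` and `u = y F_{W⁰,W*}(x)`. Since `∇L_i(W) = ℓ'(z) y ∇f_W(x)`, the
first-order expansions of `f` at `W` and at `W⁰`, both evaluated at `W*`, turn the left-hand
side into `ℓ'(z) (z - u + e)` where `e` is `y` times a difference of two linearization errors,
so `|e| ≤ 2 ε_app(τ)`. The loss is convex, which gives `ℓ'(z) (z - u) ≥ ℓ(z) - ℓ(u)`, and
`|ℓ'| ≤ ℓ`, which gives `ℓ'(z) e ≥ -2 ε_app(τ) ℓ(z)`.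

Since `ε_app(τ)` is an `sSup` (which is `0` for an unbounded set), the bound `|·| ≤ ε_app(τ)`
needs the linearization errors to be bounded on the ball. This holds because the network only
reads the finitely many weights in the blocks controlled by `B(W⁰, τ)`, and every quantity it
computes is built from these and the inputs by sums, products, `σ` and `σ' ∈ [0, 1]`.
-/

open Filter Asymptotics

lemma abs_relu_le (z : ℝ) : |relu z| ≤ |z| := by
  rcases le_total z 0 with h | h <;> simp [relu, h, abs_nonneg]

lemma abs_relu'_le_one (z : ℝ) : |relu' z| ≤ 1 := by
  unfold relu'; split_ifs <;> simp

lemma hasDerivAt_xent (z : ℝ) : HasDerivAt xent (xent' z) z := by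
  have h := ((hasDerivAt_neg z).exp.const_add 1).log (by positivity)
  refine h.congr_deriv ?_
  rw [xent', Real.exp_neg]
  field_simp
  ring

lemma xent'_monotone : Monotone xent' := fun v w hvw => by
  unfold xent'
  gcongr

lemma convexOn_xent : ConvexOn ℝ Set.univ xent := by
  refine Monotone.convexOn_univ_of_deriv (fun z => (hasDerivAt_xent z).differentiableAt) ?_
  rw [funext fun z => (hasDerivAt_xent z).deriv]
  exact xent'_monotone

lemma xent_add_xent'_mul_sub_le (z u : ℝ) : xent z + xent' z * (u - z) ≤ xent u := by
  rcases lt_trichotomy z u with h | rfl | h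
  · have := convexOn_xent.le_slope_of_hasDerivAt trivial trivial h (hasDerivAt_xent z)
    rw [slope_def_field, le_div_iff₀ (sub_pos.2 h)] at this
    linarith
  · simp
  · have := convexOn_xent.slope_le_of_hasDerivAt trivial trivial h (hasDerivAt_xent z)
    rw [slope_def_field, div_le_iff₀ (sub_pos.2 h)] at this
    linarith

-- `-ℓ'(z) = t / (1 + t)` with `t = e^{-z}`, and `t / (1 + t) ≤ log (1 + t)`.
lemma abs_xent'_le_xent (z : ℝ) : |xent' z| ≤ xent z := by
  have h := Real.one_sub_inv_le_log_of_pos (by positivity : 0 < 1 + Real.exp (-z))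
  have : 1 - (1 + Real.exp (-z))⁻¹ = 1 / (1 + Real.exp z) := by
    rw [Real.exp_neg]
    field_simp
    ring
  rw [xent', abs_neg, abs_of_pos (by positivity), ← this]
  exact h

lemma one_sub_mul_xent_sub_xent_le (z u e δ : ℝ) (he : |e| ≤ δ) :
    (1 - δ) * xent z - xent u ≤ xent' z * (z - u + e) := by
  have htangent := xent_add_xent'_mul_sub_le z u
  have hperturb : |xent' z * e| ≤ xent z * δ := by
    rw [abs_mul]
    exact mul_le_mul (abs_xent'_le_xent z) he (abs_nonneg e) ((abs_nonneg _).trans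
      (abs_xent'_le_xent z))
  linarith [neg_abs_le (xent' z * e)]

section Gradient

variable {L m d : ℕ}

lemma gradInner_neg (W : Wts L m d) (x : Fin d → ℝ) (V : Wts L m d) :
    gradInner L m d W x (-V) = -gradInner L m d W x V := by
  simp only [gradInner, inner2, Pi.neg_apply, mul_neg, Finset.sum_neg_distrib]

lemma sum_inner2_sampleLossGrad (x : Fin d → ℝ) (y : ℝ) (W V : Wts L m d) :
    ∑ l : Fin L, inner2 m d (V l) (sampleLossGrad L m d x y W l) =
      xent' (y * netOut L m d W x) * y * gradInner L m d W x V := by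
  simp only [inner2, sampleLossGrad, gradInner, Finset.mul_sum]
  exact Finset.sum_congr rfl fun _ _ => Finset.sum_congr rfl fun _ _ =>
    Finset.sum_congr rfl fun _ _ => by ring

def linearizationError (W W' : Wts L m d) (x : Fin d → ℝ) : ℝ :=
  netOut L m d W' x - netOut L m d W x - gradInner L m d W x (W' - W)

lemma gradInner_sub_eq_add_linearizationError (W W' : Wts L m d) (x : Fin d → ℝ) :
    gradInner L m d W x (W - W') =
      netOut L m d W x - netOut L m d W' x + linearizationError W W' x := by
  rw [← neg_sub W' W, gradInner_neg, linearizationError]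
  ring

lemma ntrf_eq_sub_linearizationError (W0 W : Wts L m d) (x : Fin d → ℝ) :
    ntrf L m d W0 W x = netOut L m d W x - linearizationError W0 W x := by
  rw [ntrf, linearizationError]
  ring

lemma gradLayer_eq_zero_outside_block (hL : 2 ≤ L) (W : Wts L m d) (x : Fin d → ℝ) {l : ℕ}
    (j : Fin m) (c : Fin (m + d)) (h : ¬((j : ℕ) < rowsOf L m l ∧ (c : ℕ) < colsOf m d l)) :
    gradLayer L m d W x l j c = 0 := by
  have hj := j.isLt
  unfold rowsOf colsOf at h
  unfold gradLayer
  split_ifs at h ⊢ <;> first | omega | simp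

end Gradient

section Boundedness

variable {β : Type*} {F : Filter β}

lemma boundedAtFilter_sum {ι : Type*} [Fintype ι] {f : ι → β → ℝ}
    (h : ∀ i, BoundedAtFilter F (f i)) : BoundedAtFilter F fun b => ∑ i, f i b :=
  IsBigO.fun_sum fun i _ => h i

lemma boundedAtFilter_of_abs_le {f g : β → ℝ} (hg : BoundedAtFilter F g)
    (h : ∀ b, |f b| ≤ |g b|) : BoundedAtFilter F f :=
  (isBigO_of_le F h).trans hg

lemma boundedAtFilter_relu {f : β → ℝ} (hf : BoundedAtFilter F f) :
    BoundedAtFilter F fun b => relu (f b) :=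
  boundedAtFilter_of_abs_le hf fun _ => abs_relu_le _

lemma boundedAtFilter_relu' (f : β → ℝ) : BoundedAtFilter F fun b => relu' (f b) :=
  boundedAtFilter_of_abs_le (const_boundedAtFilter F (1 : ℝ)) fun _ => by
    simpa using abs_relu'_le_one _

lemma boundedAtFilter_ite_zero (p : Prop) [Decidable p] {f : β → ℝ}
    (hf : p → BoundedAtFilter F f) : BoundedAtFilter F fun b => if p then f b else 0 := by
  by_cases hp : p
  · simpa only [if_pos hp] using hf hp
  · simp only [if_neg hp]
    exact const_boundedAtFilter F 0

lemma boundedAtFilter_dite_zero (p : Prop) [Decidable p] {f : p → β → ℝ}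
    (hf : ∀ hp, BoundedAtFilter F (f hp)) :
    BoundedAtFilter F fun b => if hp : p then f hp b else 0 := by
  by_cases hp : p
  · simpa only [dif_pos hp] using hf hp
  · simp only [dif_neg hp]
    exact const_boundedAtFilter F 0

lemma boundedAtFilter_principal_iff {S : Set β} {f : β → ℝ} :
    BoundedAtFilter (𝓟 S) f ↔ ∃ C, ∀ b ∈ S, |f b| ≤ C := by
  simp [BoundedAtFilter, isBigO_principal]

variable {L m d : ℕ}

-- Only the entries in the blocks read by the network (those measured by `layerNormSq`) count.
def BlockBoundedAt (F : Filter β) (W : β → Wts L m d) : Prop :=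
  ∀ (l : Fin L) (j : Fin m) (c : Fin (m + d)), (j : ℕ) < rowsOf L m l →
    (c : ℕ) < colsOf m d l → BoundedAtFilter F fun b => W b l j c

variable {W V : β → Wts L m d} {x : β → Fin d → ℝ}

lemma BlockBoundedAt.sub (hW : BlockBoundedAt F W) (hV : BlockBoundedAt F V) :
    BlockBoundedAt F fun b => W b - V b :=
  fun l j c hj hc => (hW l j c hj hc).sub (hV l j c hj hc)

lemma BlockBoundedAt.extW_entry (hW : BlockBoundedAt F W) {l : ℕ} (hl : l < L) {j : Fin m}
    {c : Fin (m + d)} (hj : (j : ℕ) < rowsOf L m l) (hc : (c : ℕ) < colsOf m d l) :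
    BoundedAtFilter F fun b => extW L m d (W b) l j c := by
  simpa only [extW, dif_pos hl] using hW ⟨l, hl⟩ j c hj hc

lemma BlockBoundedAt.extW_first (hL : 2 ≤ L) (hW : BlockBoundedAt F W) (j : Fin m)
    (k : Fin d) : BoundedAtFilter F fun b => extW L m d (W b) 0 j (colD m d k) :=
  hW.extW_entry (by omega) (by simp [rowsOf, show 0 ≠ L - 1 by omega]) (by simp [colsOf, colD])

lemma BlockBoundedAt.extW_hidden (hL : 2 ≤ L) (hW : BlockBoundedAt F W) {l : ℕ}
    (hl₁ : 1 ≤ l) (hl₂ : l ≤ L - 2) (j : Fin m) (k : Fin m) :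
    BoundedAtFilter F fun b => extW L m d (W b) l j (colM m d k) :=
  hW.extW_entry (by omega) (by simp [rowsOf, show l ≠ L - 1 by omega])
    (by simp [colsOf, colM, show l ≠ 0 by omega])

lemma BlockBoundedAt.extW_last (hL : 2 ≤ L) (hW : BlockBoundedAt F W) {j : Fin m}
    (hj : (j : ℕ) = 0) (k : Fin m) :
    BoundedAtFilter F fun b => extW L m d (W b) (L - 1) j (colM m d k) :=
  hW.extW_entry (by omega) (by simp [rowsOf, hj])
    (by simp [colsOf, colM, show L - 1 ≠ 0 by omega])

lemma boundedAtFilter_preact (hL : 2 ≤ L) (hW : BlockBoundedAt F W)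
    (hx : ∀ k, BoundedAtFilter F fun b => x b k) :
    ∀ s ≤ L - 2, ∀ j, BoundedAtFilter F fun b => preact m d (extW L m d (W b)) (x b) s j
  | 0, _, j => boundedAtFilter_sum fun k => (hW.extW_first hL j k).mul (hx k)
  | s + 1, hs, j => boundedAtFilter_sum fun k => (hW.extW_hidden hL (by omega) hs j k).mul
      (boundedAtFilter_relu (boundedAtFilter_preact hL hW hx s (by omega) k))

lemma boundedAtFilter_deltaAux (hL : 2 ≤ L) (hW : BlockBoundedAt F W) :
    ∀ t ≤ L - 2, ∀ k, BoundedAtFilter F fun b => deltaAux L m d (extW L m d (W b)) (x b) t k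
  | 0, _, k => ((const_boundedAtFilter F (Real.sqrt m)).mul (boundedAtFilter_sum fun j =>
      boundedAtFilter_ite_zero _ fun hj => hW.extW_last hL hj k)).mul (boundedAtFilter_relu' _)
  | t + 1, ht, k => (boundedAtFilter_relu' _).mul (boundedAtFilter_sum fun j =>
      (hW.extW_hidden hL (by omega) (by omega) j k).mul
        (boundedAtFilter_deltaAux hL hW t (by omega) j))

lemma boundedAtFilter_gradLayer (hL : 2 ≤ L) (hW : BlockBoundedAt F W)
    (hx : ∀ k, BoundedAtFilter F fun b => x b k) {l : ℕ} (hl : l < L) (j : Fin m)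
    (c : Fin (m + d)) : BoundedAtFilter F fun b => gradLayer L m d (W b) (x b) l j c := by
  have hdelta (s : ℕ) : BoundedAtFilter F fun b => delta L m d (extW L m d (W b)) (x b) s j :=
    boundedAtFilter_deltaAux hL hW _ (by omega) j
  unfold gradLayer
  by_cases hlast : l = L - 1
  · simp only [if_pos hlast]
    exact boundedAtFilter_dite_zero _ fun _ => (const_boundedAtFilter F (Real.sqrt m)).mul
      (boundedAtFilter_relu (boundedAtFilter_preact hL hW hx _ le_rfl _))
  by_cases hfirst : l = 0
  · simp only [if_neg hlast, if_pos hfirst]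
    exact (hdelta 0).mul (boundedAtFilter_dite_zero _ fun _ => hx _)
  · simp only [if_neg hlast, if_neg hfirst]
    exact (hdelta l).mul (boundedAtFilter_dite_zero _ fun _ =>
      boundedAtFilter_relu (boundedAtFilter_preact hL hW hx _ (by omega) _))

lemma boundedAtFilter_netOut (hL : 2 ≤ L) (hW : BlockBoundedAt F W)
    (hx : ∀ k, BoundedAtFilter F fun b => x b k) :
    BoundedAtFilter F fun b => netOut L m d (W b) (x b) :=
  (const_boundedAtFilter F (Real.sqrt m)).mul (boundedAtFilter_sum fun _ =>
    boundedAtFilter_sum fun k => boundedAtFilter_ite_zero _ fun hj =>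
      (hW.extW_last hL hj k).mul
        (boundedAtFilter_relu (boundedAtFilter_preact hL hW hx _ le_rfl k)))

lemma boundedAtFilter_gradInner (hL : 2 ≤ L) (hW : BlockBoundedAt F W)
    (hV : BlockBoundedAt F V) (hx : ∀ k, BoundedAtFilter F fun b => x b k) :
    BoundedAtFilter F fun b => gradInner L m d (W b) (x b) (V b) := by
  refine boundedAtFilter_sum fun l => boundedAtFilter_sum fun j => boundedAtFilter_sum fun c => ?_
  by_cases hblock : (j : ℕ) < rowsOf L m l ∧ (c : ℕ) < colsOf m d l
  · exact (boundedAtFilter_gradLayer hL hW hx l.isLt j c).mul (hV l j c hblock.1 hblock.2)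
  · simp only [gradLayer_eq_zero_outside_block hL _ _ j c hblock, zero_mul]
    exact const_boundedAtFilter F 0

lemma boundedAtFilter_linearizationError (hL : 2 ≤ L) (hW : BlockBoundedAt F W)
    (hV : BlockBoundedAt F V) (hx : ∀ k, BoundedAtFilter F fun b => x b k) :
    BoundedAtFilter F fun b => linearizationError (W b) (V b) (x b) :=
  ((boundedAtFilter_netOut hL hV hx).sub (boundedAtFilter_netOut hL hW hx)).sub
    (boundedAtFilter_gradInner hL hW (hV.sub hW) hx)

end Boundedness

section Ball

variable {L m d : ℕ}

lemma abs_le_sqrt_layerNormSq {l : ℕ} (A : Fin m → Fin (m + d) → ℝ) {j : Fin m}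
    {c : Fin (m + d)} (hj : (j : ℕ) < rowsOf L m l) (hc : (c : ℕ) < colsOf m d l) :
    |A j c| ≤ Real.sqrt (layerNormSq L m d l A) := by
  rw [← Real.sqrt_sq_eq_abs]
  refine Real.sqrt_le_sqrt ?_
  have hrow := Finset.single_le_sum (f := fun c' : Fin (m + d) =>
      if (j : ℕ) < rowsOf L m l ∧ (c' : ℕ) < colsOf m d l then A j c' ^ 2 else 0)
    (fun _ _ => by positivity) (Finset.mem_univ c)
  have hcol := Finset.single_le_sum (f := fun j' : Fin m => ∑ c' : Fin (m + d),
      if (j' : ℕ) < rowsOf L m l ∧ (c' : ℕ) < colsOf m d l then A j' c' ^ 2 else 0)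
    (fun _ _ => Finset.sum_nonneg fun _ _ => by positivity) (Finset.mem_univ j)
  exact (le_of_eq (by simp [hj, hc])).trans (hrow.trans hcol)

lemma inBall_self (W0 : Wts L m d) {τ : ℝ} (hτ : 0 ≤ τ) : inBall L m d W0 W0 τ := fun _ => by
  simpa [layerNormSq] using hτ

lemma blockBoundedAt_principal_of_inBall {β : Type*} {S : Set β} {W : β → Wts L m d}
    (W0 : Wts L m d) (τ : ℝ) (hS : ∀ b ∈ S, inBall L m d W0 (W b) τ) :
    BlockBoundedAt (𝓟 S) W := by
  intro l j c hj hc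
  refine boundedAtFilter_principal_iff.2 ⟨|W0 l j c| + τ, fun b hb => ?_⟩
  have hclose := (abs_le_sqrt_layerNormSq (W b l - W0 l) hj hc).trans (hS b hb l)
  rw [Pi.sub_apply, Pi.sub_apply] at hclose
  linarith [abs_sub_abs_le_abs_sub (W b l j c) (W0 l j c)]

lemma abs_linearizationError_le_epsApp {n : ℕ} (hL : 2 ≤ L) (X : Fin n → Fin d → ℝ)
    {W0 W W' : Wts L m d} {τ : ℝ} (hW : inBall L m d W0 W τ) (hW' : inBall L m d W0 W' τ)
    (i : Fin n) : |linearizationError W W' (X i)| ≤ epsApp L m d n X W0 τ := by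
  set S := {p : Fin n × Wts L m d × Wts L m d |
    inBall L m d W0 p.2.1 τ ∧ inBall L m d W0 p.2.2 τ}
  have hX (k : Fin d) : BoundedAtFilter (𝓟 S) fun p => X p.1 k :=
    let ⟨C, hC⟩ := Finite.exists_le fun i => |X i k|
    boundedAtFilter_principal_iff.2 ⟨C, fun p _ => hC p.1⟩
  obtain ⟨C, hC⟩ := boundedAtFilter_principal_iff.1 <| boundedAtFilter_linearizationError hL
    (blockBoundedAt_principal_of_inBall W0 τ fun _ hp => hp.1)
    (blockBoundedAt_principal_of_inBall W0 τ fun _ hp => hp.2) hX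
  refine le_csSup ⟨C, ?_⟩ ⟨i, W, W', hW, hW', rfl⟩
  rintro e ⟨i, W, W', hW, hW', rfl⟩
  exact hC (i, W, W') ⟨hW, hW'⟩

end Ball

end Paper

open Paper

theorem loss_gradient_inner_bound_general
    (L m d n : ℕ) (hL : 2 ≤ L)
    (X : Fin n → Fin d → ℝ) (Y : Fin n → ℝ)
    (hY : ∀ i, Y i = 1 ∨ Y i = -1)
    (W0 W Wstar : Wts L m d) (τ : ℝ) (hτ : 0 < τ)
    (hW : inBall L m d W0 W τ) (hWstar : inBall L m d W0 Wstar τ) :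
    ∀ i : Fin n,
      (∑ l : Fin L,
          inner2 m d (fun j c => W l j c - Wstar l j c)
            (sampleLossGrad L m d (X i) (Y i) W (l : ℕ))) ≥
        (1 - 2 * epsApp L m d n X W0 τ) * xent (Y i * netOut L m d W (X i)) -
          xent (Y i * ntrf L m d W0 Wstar (X i)) := by
  intro i
  set A := linearizationError W Wstar (X i)
  set B := linearizationError W0 Wstar (X i)
  have hA : |A| ≤ epsApp L m d n X W0 τ := abs_linearizationError_le_epsApp hL X hW hWstar i
  have hB : |B| ≤ epsApp L m d n X W0 τ :=
    abs_linearizationError_le_epsApp hL X (inBall_self W0 hτ.le) hWstar i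
  have hY1 : |Y i| = 1 := by rcases hY i with h | h <;> simp [h]
  have he : |Y i * (A - B)| ≤ 2 * epsApp L m d n X W0 τ := by
    rw [abs_mul, hY1, one_mul]
    linarith [abs_sub A B]
  calc (1 - 2 * epsApp L m d n X W0 τ) * xent (Y i * netOut L m d W (X i)) -
        xent (Y i * ntrf L m d W0 Wstar (X i))
      ≤ xent' (Y i * netOut L m d W (X i)) * (Y i * netOut L m d W (X i) -
          Y i * ntrf L m d W0 Wstar (X i) + Y i * (A - B)) :=
        one_sub_mul_xent_sub_xent_le _ _ _ _ he
    _ = xent' (Y i * netOut L m d W (X i)) * Y i * gradInner L m d W (X i) (W - Wstar) := by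
        rw [gradInner_sub_eq_add_linearizationError, ntrf_eq_sub_linearizationError]
        ring
    _ = _ := (sum_inner2_sampleLossGrad (X i) (Y i) W (W - Wstar)).symm

/-- inequality (A.6) in the proof of Lemma 5.1.
If `W, W* ∈ B(W0, τ)`, then for every training index `i`:
`⟨W − W*, ∇_W L_i(W)⟩ ≥ (1 − 2ε_app(τ)) ℓ(y_i f_W(x_i)) − ℓ(y_i F_{W0,W*}(x_i))`. -/
theorem loss_gradient_inner_bound
    (L m d n : ℕ) (hL : 2 ≤ L) (hm : 1 ≤ m) (hd : 1 ≤ d) (hn : 1 ≤ n)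
    (X : Fin n → Fin d → ℝ) (Y : Fin n → ℝ)
    (hX : ∀ i, ∑ k, (X i k) ^ 2 = 1)
    (hY : ∀ i, Y i = 1 ∨ Y i = -1)
    (W0 W Wstar : Wts L m d) (τ : ℝ) (hτ : 0 < τ)
    (hW : inBall L m d W0 W τ) (hWstar : inBall L m d W0 Wstar τ) :
    ∀ i : Fin n,
      (∑ l : Fin L,
          inner2 m d (fun j c => W l j c - Wstar l j c)
            (sampleLossGrad L m d (X i) (Y i) W (l : ℕ))) ≥
        (1 - 2 * epsApp L m d n X W0 τ) * xent (Y i * netOut L m d W (X i)) -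
          xent (Y i * ntrf L m d W0 Wstar (X i)) :=
  loss_gradient_inner_bound_general L m d n hL X Y hY W0 W Wstar τ hτ hW hWstar
end
end
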